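/- arXiv:2412.15927 — 10 statements merged into one kernel-verified Lean document; each statement's English description precedes it below -/
import Mathlib

section
/- For the complete bipartite graph G = K_{n,b} with partite sets X of size n and Y of size b, G is (t,n)-choosable (i.e., L-colorable for every list assignment L with |L(x)| = t for x ∈ X and |L(y)| = n for y ∈ Y) if and only if b < t^n. -/
/-!
Call a choice `c ∈ ∏_{x ∈ X} L(x)` of colours on `X` *blocking* for `y ∈ Y` if it uses up all of
`L(y)`. Since `|L(y)| = |X|`, a blocking choice is injective with image exactly `L(y)`. If each of
the `t ^ |X|` choices blocked some `y`, all of them would be injective, and then two distinct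
choices never have the same image (otherwise overwriting one coordinate of one by the other
creates a repeated colour); so `|Y| ≥ t ^ |X|`. Conversely, if `|Y| ≥ t ^ |X|`, give the vertices
of `X` pairwise disjoint lists and let the lists on `Y` run through all transversals of them:
whatever `X` is coloured with is the whole list of some `y`.
-/

open Finset

def properListColoring {V : Type*} (G : SimpleGraph V) (L : V → Finset ℕ) (f : V → ℕ) : Prop :=
  (∀ v, f v ∈ L v) ∧ ∀ u v, G.Adj u v → f u ≠ f v

theorem properListColoring_completeBipartiteGraph_iff {X Y : Type*} {L : X ⊕ Y → Finset ℕ}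
    {f : X ⊕ Y → ℕ} :
    properListColoring (completeBipartiteGraph X Y) L f ↔
      (∀ v, f v ∈ L v) ∧ ∀ x y, f (Sum.inl x) ≠ f (Sum.inr y) := by
  refine and_congr_right fun _ => ⟨fun h x y => h _ _ (by simp), ?_⟩
  rintro h (x | y) (x' | y') hadj
  · simp at hadj
  · exact h x y'
  · exact (h x' y).symm
  · simp at hadj

section Transversals

variable {ι α : Type*} [Fintype ι] [DecidableEq ι] [DecidableEq α]

theorem injOn_image_univ_of_forall_injective (A : ι → Finset α)
    (hinj : ∀ c ∈ Fintype.piFinset A, Function.Injective c) :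
    Set.InjOn (fun c : ι → α => univ.image c) (Fintype.piFinset A) := by
  intro c hc c' hc' himage
  by_contra hne
  obtain ⟨i, hi⟩ := Function.ne_iff.mp hne
  obtain ⟨j, -, hj⟩ : ∃ j ∈ univ, c j = c' i := by
    rw [← mem_image, show univ.image c = univ.image c' from himage]
    exact mem_image_of_mem _ (mem_univ i)
  have hji : j ≠ i := by rintro rfl; exact hi hj
  have hmem : Function.update c i (c' i) ∈ Fintype.piFinset A := by
    rw [mem_coe, Fintype.mem_piFinset] at hc hc'
    rw [Fintype.mem_piFinset]
    intro k
    rcases eq_or_ne k i with rfl | hk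
    · simpa using hc' k
    · simpa [hk] using hc k
  refine hji (hinj _ hmem ?_)
  rw [Function.update_self, Function.update_of_ne hji, hj]

theorem exists_mem_piFinset_forall_not_subset_image {κ : Type*} [Fintype κ]
    (A : ι → Finset α) (B : κ → Finset α) (hB : ∀ k, Fintype.card ι ≤ (B k).card)
    (hcard : Fintype.card κ < ∏ i, (A i).card) :
    ∃ c ∈ Fintype.piFinset A, ∀ k, ¬ B k ⊆ univ.image c := by
  by_contra! hblock
  choose φ hφ using fun c : Fintype.piFinset A => hblock c c.2
  have himage : ∀ c : Fintype.piFinset A, univ.image (c : ι → α) = B (φ c) := fun c =>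
    (eq_of_subset_of_card_le (hφ c) (card_image_le.trans (hB (φ c)))).symm
  have hinj : ∀ c ∈ Fintype.piFinset A, Function.Injective c := by
    intro c hc
    have hcard_image : (univ.image c).card = (univ : Finset ι).card :=
      le_antisymm card_image_le (by rw [himage ⟨c, hc⟩, card_univ]; exact hB _)
    simpa using card_image_iff.mp hcard_image
  have hφinj : Function.Injective φ := fun c c' h =>
    Subtype.ext (injOn_image_univ_of_forall_injective A hinj c.2 c'.2
      (by simp only [himage, h]))
  have hle := Fintype.card_le_of_injective φ hφinj
  rw [Fintype.card_coe, Fintype.card_piFinset] at hle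
  omega

end Transversals

theorem exists_properListColoring_completeBipartiteGraph {X Y : Type*} [Fintype X]
    [DecidableEq X] [Fintype Y] (L : X ⊕ Y → Finset ℕ) {t : ℕ}
    (hX : ∀ x, (L (Sum.inl x)).card = t) (hY : ∀ y, Fintype.card X ≤ (L (Sum.inr y)).card)
    (hcard : Fintype.card Y < t ^ Fintype.card X) :
    ∃ f, properListColoring (completeBipartiteGraph X Y) L f := by
  obtain ⟨c, hc, hfree⟩ := exists_mem_piFinset_forall_not_subset_image
    (fun x => L (Sum.inl x)) (fun y => L (Sum.inr y)) hY (by simpa [hX] using hcard)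
  choose g hgL hgc using fun y => not_subset.mp (hfree y)
  refine ⟨Sum.elim c g, properListColoring_completeBipartiteGraph_iff.mpr ⟨?_, ?_⟩⟩
  · rintro (x | y)
    · exact Fintype.mem_piFinset.mp hc x
    · exact hgL y
  · intro x y hxy
    exact hgc y (mem_image.mpr ⟨x, mem_univ x, hxy⟩)

theorem exists_not_properListColoring_completeBipartiteGraph {X Y : Type*} [Fintype X]
    [DecidableEq X] [Fintype Y] {t : ℕ} (ht : 0 < t)
    (hcard : t ^ Fintype.card X ≤ Fintype.card Y) :
    ∃ L : X ⊕ Y → Finset ℕ, (∀ x, (L (Sum.inl x)).card = t) ∧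
      (∀ y, (L (Sum.inr y)).card = Fintype.card X) ∧
      ∀ f, ¬ properListColoring (completeBipartiteGraph X Y) L f := by
  have : Nonempty (Fin t) := ⟨⟨0, ht⟩⟩
  let enc : X × Fin t ↪ ℕ := (Fintype.equivFin _).toEmbedding.trans Fin.valEmbedding
  obtain ⟨ε⟩ : Nonempty ((X → Fin t) ↪ Y) :=
    Function.Embedding.nonempty_of_card_le (by simpa using hcard)
  let σ : Y → X → Fin t := Function.invFun ε
  -- `L (inl x)` is the block `{x} × Fin t`; `L (inr y)` is the transversal `σ y` of the blocks.
  let L : X ⊕ Y → Finset ℕ :=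
    Sum.elim (fun x => univ.image fun r => enc (x, r))
      (fun y => univ.image fun x => enc (x, σ y x))
  refine ⟨L, fun x => ?_, fun y => ?_, fun f hf => ?_⟩
  · simp only [L, Sum.elim_inl]
    rw [card_image_of_injective _ fun r r' h => (Prod.mk.inj (enc.injective h)).2,
      card_univ, Fintype.card_fin]
  · simp only [L, Sum.elim_inr]
    rw [card_image_of_injective _ fun x x' h => (Prod.mk.inj (enc.injective h)).1,
      card_univ]
  · obtain ⟨hfL, hfX⟩ := properListColoring_completeBipartiteGraph_iff.mp hf
    choose p hp using fun x => (mem_image.mp (hfL (Sum.inl x))).imp fun _ => And.right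
    obtain ⟨y, hy⟩ : ∃ y, σ y = p := Function.invFun_surjective ε.injective p
    obtain ⟨x, -, hx⟩ := mem_image.mp (hfL (Sum.inr y))
    exact hfX x y (by rw [← hx, ← hp x, hy])

theorem stmt_1_general (n b t : ℕ) (ht : 1 ≤ t) :
    (∀ L : Fin n ⊕ Fin b → Finset ℕ,
        (∀ x : Fin n, (L (Sum.inl x)).card = t) →
        (∀ y : Fin b, (L (Sum.inr y)).card = n) →
        ∃ f, properListColoring (completeBipartiteGraph (Fin n) (Fin b)) L f) ↔
      b < t ^ n := by
  constructor
  · intro hchoosable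
    by_contra! hcard
    obtain ⟨L, hX, hY, hL⟩ := exists_not_properListColoring_completeBipartiteGraph
      (X := Fin n) (Y := Fin b) ht (by simpa using hcard)
    obtain ⟨f, hf⟩ := hchoosable L hX (by simpa using hY)
    exact hL f hf
  · intro hcard L hX hY
    exact exists_properListColoring_completeBipartiteGraph L hX (by simp [hY])
      (by simpa using hcard)

theorem stmt_1 (n b t : ℕ) (hn : 1 ≤ n) (hb : 1 ≤ b) (ht : 1 ≤ t) :
    (∀ L : Fin n ⊕ Fin b → Finset ℕ,
        (∀ x : Fin n, (L (Sum.inl x)).card = t) →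
        (∀ y : Fin b, (L (Sum.inr y)).card = n) →
        ∃ f, properListColoring (completeBipartiteGraph (Fin n) (Fin b)) L f) ↔
      b < t ^ n :=
  stmt_1_general n b t ht
end

section
/- Let G = K_{3,3} with bipartition X = {x_1, x_2, x_3}, Y = {y_1, y_2, y_3}, and let f: V(G) → {2,3} be a function with exactly one vertex x satisfying f(x) = 3 (all others have f-value 2). Then G is f-choosable: for every list assignment L with |L(v)| = f(v) for all v, G has a proper L-coloring. -/
open Finset


namespace K33

def Good (A1 A2 A3 B1 B2 B3 : Finset ℕ) : Prop :=
  ∃ b1 ∈ B1, ∃ b2 ∈ B2, ∃ b3 ∈ B3,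
    ¬ A1 ⊆ {b1, b2, b3} ∧ ¬ A2 ⊆ {b1, b2, b3} ∧ ¬ A3 ⊆ {b1, b2, b3}

lemma not_subset_of_lt {A S : Finset ℕ} (h : S.card < A.card) : ¬ A ⊆ S :=
  fun hs => absurd (Finset.card_le_card hs) (by omega)

lemma card_triple_le (b1 b2 t : ℕ) : ({b1, b2, t} : Finset ℕ).card ≤ 3 := by
  apply le_trans (Finset.card_insert_le _ _)
  have := Finset.card_insert_le b2 ({t} : Finset ℕ)
  simp at this ⊢; omega

lemma pick3 {A B : Finset ℕ} (hA : A.card = 3) (hB : B.card = 2) (b1 b2 : ℕ) :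
    ∃ t ∈ B, ¬ A ⊆ {b1, b2, t} := by
  obtain ⟨t1, t2, hne, rfl⟩ := Finset.card_eq_two.mp hB
  by_contra h
  push_neg at h
  have h1 := h t1 (by simp)
  have h2 := h t2 (by simp)
  have hsub : A ⊆ {b1, b2} := by
    intro x hx
    have e1 := h1 hx
    have e2 := h2 hx
    simp only [Finset.mem_insert, Finset.mem_singleton] at e1 e2 ⊢
    rcases e1 with h | h | h <;> rcases e2 with h' | h' | h' <;> try tauto
    exact absurd (h ▸ h') hne
  have := Finset.card_le_card hsub
  have : ({b1, b2} : Finset ℕ).card ≤ 2 := by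
    apply le_trans (Finset.card_insert_le _ _); simp
  omega

lemma mem_of_pair_subset {A : Finset ℕ} (hA : A.card = 2) {c t : ℕ}
    (h : A ⊆ {c, t}) : c ∈ A := by
  by_contra hc
  have hsub : A ⊆ {t} := by
    intro x hx
    have := h hx
    simp only [Finset.mem_insert, Finset.mem_singleton] at this ⊢
    rcases this with rfl | rfl
    · exact absurd hx hc
    · rfl
  have := Finset.card_le_card hsub
  simp at this; omega

lemma exists_ne_mem {B : Finset ℕ} (hB : B.card = 2) (c : ℕ) :
    ∃ b ∈ B, b ≠ c := by
  have : ¬ B ⊆ {c} := not_subset_of_lt (by simp [hB])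
  obtain ⟨b, hb, hbc⟩ := Finset.not_subset.mp this
  exact ⟨b, hb, by simpa using hbc⟩

lemma good_swapA {A1 A2 A3 B1 B2 B3 : Finset ℕ} (h : Good A1 A3 A2 B1 B2 B3) :
    Good A1 A2 A3 B1 B2 B3 := by
  obtain ⟨b1, h1, b2, h2, b3, h3, hA, hB, hC⟩ := h
  exact ⟨b1, h1, b2, h2, b3, h3, hA, hC, hB⟩

lemma good_swap12 {A1 A2 A3 B1 B2 B3 : Finset ℕ} (h : Good A1 A2 A3 B2 B1 B3) :
    Good A1 A2 A3 B1 B2 B3 := by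
  obtain ⟨b1, h1, b2, h2, b3, h3, hA, hB, hC⟩ := h
  have e : ({b2, b1, b3} : Finset ℕ) = {b1, b2, b3} := by ext y; simp; tauto
  exact ⟨b2, h2, b1, h1, b3, h3, e ▸ hA, e ▸ hB, e ▸ hC⟩

lemma good_swap23 {A1 A2 A3 B1 B2 B3 : Finset ℕ} (h : Good A1 A2 A3 B1 B3 B2) :
    Good A1 A2 A3 B1 B2 B3 := by
  obtain ⟨b1, h1, b2, h2, b3, h3, hA, hB, hC⟩ := h
  have e : ({b1, b3, b2} : Finset ℕ) = {b1, b2, b3} := by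
    ext y; simp; tauto
  exact ⟨b1, h1, b3, h3, b2, h2, e ▸ hA, e ▸ hB, e ▸ hC⟩


lemma master {A1 A2 A3 B1 B2 B3 : Finset ℕ} (hA1 : A1.card = 3) (hB3 : B3.card = 2)
    {u2 u3 b1 b2 : ℕ} (hu2 : u2 ∈ A2) (hu3 : u3 ∈ A3) (hb1 : b1 ∈ B1) (hb2 : b2 ∈ B2)
    (h21 : u2 ≠ b1) (h22 : u2 ≠ b2) (h23 : u2 ∉ B3)
    (h31 : u3 ≠ b1) (h32 : u3 ≠ b2) (h33 : u3 ∉ B3) :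
    Good A1 A2 A3 B1 B2 B3 := by
  obtain ⟨t, ht, hA1t⟩ := pick3 hA1 hB3 b1 b2
  refine ⟨b1, hb1, b2, hb2, t, ht, hA1t, ?_, ?_⟩
  · intro hs
    have := hs hu2
    simp only [Finset.mem_insert, Finset.mem_singleton] at this
    rcases this with rfl | rfl | rfl
    · exact h21 rfl
    · exact h22 rfl
    · exact h23 ht
  · intro hs
    have := hs hu3
    simp only [Finset.mem_insert, Finset.mem_singleton] at this
    rcases this with rfl | rfl | rfl
    · exact h31 rfl
    · exact h32 rfl
    · exact h33 ht

lemma pairCase {A1 A2 A3 B1 B2 B3 : Finset ℕ}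
    (hA1 : A1.card = 3) (hA2 : A2.card = 2) (hA3 : A3.card = 2)
    (hB1 : B1.card = 2) (hB2 : B2.card = 2) (hB3 : B3.card = 2)
    {c : ℕ} (hc1 : c ∈ B1) (hc2 : c ∈ B2) (hc3 : c ∉ B3) :
    Good A1 A2 A3 B1 B2 B3 := by
  obtain ⟨t1, t2, htne, hB3eq⟩ := Finset.card_eq_two.mp hB3
  have ht1 : t1 ∈ B3 := by rw [hB3eq]; simp
  have ht2 : t2 ∈ B3 := by rw [hB3eq]; simp
  have hset : ∀ t : ℕ, ({c, c, t} : Finset ℕ) = {c, t} := by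
    intro t; rw [Finset.insert_idem]
  have hA1t : ∀ t : ℕ, ¬ A1 ⊆ {c, c, t} := by
    intro t
    apply not_subset_of_lt
    rw [hset]
    have : ({c, t} : Finset ℕ).card ≤ 2 := by
      apply le_trans (Finset.card_insert_le _ _); simp
    omega
  by_cases h1 : ¬ A2 ⊆ {c, t1} ∧ ¬ A3 ⊆ {c, t1}
  · exact ⟨c, hc1, c, hc2, t1, ht1, hA1t t1, by rw [hset t1]; exact h1.1, by rw [hset t1]; exact h1.2⟩
  by_cases h2 : ¬ A2 ⊆ {c, t2} ∧ ¬ A3 ⊆ {c, t2}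
  · exact ⟨c, hc1, c, hc2, t2, ht2, hA1t t2, by rw [hset t2]; exact h2.1, by rw [hset t2]; exact h2.2⟩
  -- both blocked
  push_neg at h1 h2
  -- derive c ∈ A2 and c ∈ A3
  have hcA2 : c ∈ A2 ∧ c ∈ A3 := by
    by_cases hb1 : A2 ⊆ {c, t1}
    · -- then t2-blockage must be A3 (A2 ⊆ both would give card ≤ 1)
      have hc2' : c ∈ A2 := mem_of_pair_subset hA2 hb1
      by_cases hb2 : A2 ⊆ {c, t2}
      · exfalso
        have : A2 ⊆ {c} := by
          intro x hx
          have e1 := hb1 hx; have e2 := hb2 hx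
          simp only [Finset.mem_insert, Finset.mem_singleton] at e1 e2 ⊢
          rcases e1 with rfl | rfl
          · rfl
          · rcases e2 with h | h
            · exact h
            · exact absurd h htne
        have := Finset.card_le_card this
        simp at this; omega
      · have := h2 -- A2 ⊆ {c,t2} → A3 ⊆ {c,t2}
        have hb3 : A3 ⊆ {c, t2} := by tauto
        exact ⟨hc2', mem_of_pair_subset hA3 hb3⟩
    · have hb3 : A3 ⊆ {c, t1} := by tauto
      have hc3' : c ∈ A3 := mem_of_pair_subset hA3 hb3
      by_cases hb2 : A2 ⊆ {c, t2}
      · exact ⟨mem_of_pair_subset hA2 hb2, hc3'⟩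
      · have hb4 : A3 ⊆ {c, t2} := by tauto
        exfalso
        have : A3 ⊆ {c} := by
          intro x hx
          have e1 := hb3 hx; have e2 := hb4 hx
          simp only [Finset.mem_insert, Finset.mem_singleton] at e1 e2 ⊢
          rcases e1 with rfl | rfl
          · rfl
          · rcases e2 with h | h
            · exact h
            · exact absurd h htne
        have := Finset.card_le_card this
        simp at this; omega
  obtain ⟨b1, hb1, hb1c⟩ := exists_ne_mem hB1 c
  obtain ⟨b2, hb2, hb2c⟩ := exists_ne_mem hB2 c
  exact master hA1 hB3 hcA2.1 hcA2.2 hb1 hb2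
    (fun h => hb1c h.symm) (fun h => hb2c h.symm) hc3
    (fun h => hb1c h.symm) (fun h => hb2c h.symm) hc3

lemma good_swap13 {A1 A2 A3 B1 B2 B3 : Finset ℕ} (h : Good A1 A2 A3 B3 B2 B1) :
    Good A1 A2 A3 B1 B2 B3 := by
  obtain ⟨b1, h1, b2, h2, b3, h3, hA, hB, hC⟩ := h
  have e : ({b3, b2, b1} : Finset ℕ) = {b1, b2, b3} := by ext y; simp; tauto
  exact ⟨b3, h3, b2, h2, b1, h1, by rw [e]; exact hA, by rw [e]; exact hB, by rw [e]; exact hC⟩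

lemma twoCross {A1 A2 A3 B1 B2 B3 : Finset ℕ} (hA1 : A1.card = 3)
    (hB1 : B1.card = 2) (hB2 : B2.card = 2) (hB3 : B3.card = 2)
    {u2 u3 : ℕ} (hu2 : u2 ∈ A2) (hu2B : u2 ∈ B1) (hu3 : u3 ∈ A3) (hu3B : u3 ∈ B2)
    (h22 : u2 ∉ B2) (h23 : u2 ∉ B3) (h31 : u3 ∉ B1) (h33 : u3 ∉ B3) :
    Good A1 A2 A3 B1 B2 B3 := by
  obtain ⟨b1, hb1, hb1ne⟩ := exists_ne_mem hB1 u2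
  obtain ⟨b2, hb2, hb2ne⟩ := exists_ne_mem hB2 u3
  exact master hA1 hB3 hu2 hu3 hb1 hb2
    (fun h => hb1ne h.symm) (fun h => h22 (h ▸ hb2)) h23
    (fun h => h31 (h ▸ hb1)) (fun h => hb2ne h.symm) h33

lemma oneIn {A1 A2 A3 B1 B2 B3 : Finset ℕ} (hA1 : A1.card = 3)
    (hB1 : B1.card = 2) (hB2 : B2.card = 2) (hB3 : B3.card = 2)
    {u2 u3 : ℕ} (hu2 : u2 ∈ A2) (hu2B : u2 ∈ B1) (hu3 : u3 ∈ A3)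
    (h22 : u2 ∉ B2) (h23 : u2 ∉ B3)
    (h31 : u3 ∉ B1) (h32 : u3 ∉ B2) (h33 : u3 ∉ B3) :
    Good A1 A2 A3 B1 B2 B3 := by
  obtain ⟨b1, hb1, hb1ne⟩ := exists_ne_mem hB1 u2
  obtain ⟨b2, hb2⟩ := Finset.card_pos.mp (by omega : 0 < B2.card)
  exact master hA1 hB3 hu2 hu3 hb1 hb2
    (fun h => hb1ne h.symm) (fun h => h22 (h ▸ hb2)) h23
    (fun h => h31 (h ▸ hb1)) (fun h => h32 (h ▸ hb2)) h33

lemma sameList {A1 A2 A3 B1 B2 B3 : Finset ℕ} (hA1 : A1.card = 3)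
    (hB1 : B1.card = 2) (hB2 : B2.card = 2) (hB3 : B3.card = 2)
    {u2 : ℕ} (hu2 : u2 ∈ A2) (hu2B : u2 ∈ B1) (hu2A3 : u2 ∈ A3)
    (h22 : u2 ∉ B2) (h23 : u2 ∉ B3) :
    Good A1 A2 A3 B1 B2 B3 := by
  obtain ⟨b1, hb1, hb1ne⟩ := exists_ne_mem hB1 u2
  obtain ⟨b2, hb2⟩ := Finset.card_pos.mp (by omega : 0 < B2.card)
  exact master hA1 hB3 hu2 hu2A3 hb1 hb2
    (fun h => hb1ne h.symm) (fun h => h22 (h ▸ hb2)) h23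
    (fun h => hb1ne h.symm) (fun h => h22 (h ▸ hb2)) h23

lemma cccAux {A1 A2 A3 B1 B2 B3 : Finset ℕ} (hA1 : A1.card = 3) (hA3 : A3.card = 2)
    (hB1 : B1.card = 2) (hB2 : B2.card = 2) (hB3 : B3.card = 2)
    (d12 : ∀ a, a ∈ B1 → a ∉ B2) (d13 : ∀ a, a ∈ B1 → a ∉ B3)
    (d23 : ∀ a, a ∈ B2 → a ∉ B3)
    {u2 : ℕ} (hu2 : u2 ∈ A2) (hu2B : u2 ∈ B1)
    (hA3U : ∀ w ∈ A3, w ∈ B1 ∨ w ∈ B2 ∨ w ∈ B3) :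
    Good A1 A2 A3 B1 B2 B3 := by
  obtain ⟨s, t, hst, hA3eq⟩ := Finset.card_eq_two.mp hA3
  have hs : s ∈ A3 := by rw [hA3eq]; simp
  have ht : t ∈ A3 := by rw [hA3eq]; simp
  have handle : ∀ w ∈ A3, w ∈ B2 ∨ w ∈ B3 → Good A1 A2 A3 B1 B2 B3 := by
    rintro w hw (hwB | hwB)
    · exact twoCross hA1 hB1 hB2 hB3 hu2 hu2B hw hwB
        (d12 _ hu2B) (d13 _ hu2B) (fun h => d12 _ h hwB) (d23 _ hwB)
    · refine good_swap23 (twoCross hA1 hB1 hB3 hB2 hu2 hu2B hw hwB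
        (d13 _ hu2B) (d12 _ hu2B) (fun h => d13 _ h hwB) (fun h => d23 _ h hwB))
  rcases hA3U s hs with hsB | hrest
  · rcases hA3U t ht with htB | hrest'
    · -- s, t ∈ B1, so A3 = B1 and u2 ∈ A3
      have hA3B1 : A3 = B1 := by
        apply Finset.eq_of_subset_of_card_le _ (by omega)
        rw [hA3eq]
        intro x hx
        simp only [Finset.mem_insert, Finset.mem_singleton] at hx
        rcases hx with rfl | rfl
        · exact hsB
        · exact htB
      exact sameList hA1 hB1 hB2 hB3 hu2 hu2B (hA3B1 ▸ hu2B)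
        (d12 _ hu2B) (d13 _ hu2B)
    · exact handle t ht hrest'
  · exact handle s hs hrest

lemma disjCase {A1 A2 A3 B1 B2 B3 : Finset ℕ}
    (hA1 : A1.card = 3) (hA2 : A2.card = 2) (hA3 : A3.card = 2)
    (hB1 : B1.card = 2) (hB2 : B2.card = 2) (hB3 : B3.card = 2)
    (d12 : ∀ a, a ∈ B1 → a ∉ B2) (d13 : ∀ a, a ∈ B1 → a ∉ B3)
    (d23 : ∀ a, a ∈ B2 → a ∉ B3) :
    Good A1 A2 A3 B1 B2 B3 := by
  obtain ⟨u2, hu2⟩ := Finset.card_pos.mp (by omega : 0 < A2.card)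
  obtain ⟨u3, hu3⟩ := Finset.card_pos.mp (by omega : 0 < A3.card)
  by_cases h2 : ∀ w ∈ A2, w ∈ B1 ∨ w ∈ B2 ∨ w ∈ B3
  · by_cases h3 : ∀ w ∈ A3, w ∈ B1 ∨ w ∈ B2 ∨ w ∈ B3
    · -- both inside the union
      rcases h2 u2 hu2 with hB | hB | hB
      · exact cccAux hA1 hA3 hB1 hB2 hB3 d12 d13 d23 hu2 hB h3
      · refine good_swap12 (cccAux hA1 hA3 hB2 hB1 hB3
          (fun a ha hb => d12 a hb ha) d23 d13 hu2 hB (fun w hw => by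
            rcases h3 w hw with h | h | h <;> tauto))
      · refine good_swap13 (cccAux hA1 hA3 hB3 hB2 hB1
          (fun a ha hb => d23 a hb ha) (fun a ha hb => d13 a hb ha)
          (fun a ha hb => d12 a hb ha) hu2 hB (fun w hw => by
            rcases h3 w hw with h | h | h <;> tauto))
    · -- A3 has an element outside
      push_neg at h3
      obtain ⟨w3, hw3, hw3n⟩ := h3
      obtain ⟨n1, n2, n3⟩ := hw3n
      rcases h2 u2 hu2 with hB | hB | hB
      · exact oneIn hA1 hB1 hB2 hB3 hu2 hB hw3 (d12 _ hB) (d13 _ hB) n1 n2 n3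
      · exact good_swap12 (oneIn hA1 hB2 hB1 hB3 hu2 hB hw3
          (fun h => d12 _ h hB) (d23 _ hB) n2 n1 n3)
      · exact good_swap13 (oneIn hA1 hB3 hB2 hB1 hu2 hB hw3
          (fun h => d23 _ h hB) (fun h => d13 _ h hB) n3 n2 n1)
  · push_neg at h2
    obtain ⟨w2, hw2, hw2n⟩ := h2
    obtain ⟨m1, m2, m3⟩ := hw2n
    by_cases h3 : ∀ w ∈ A3, w ∈ B1 ∨ w ∈ B2 ∨ w ∈ B3
    · rcases h3 u3 hu3 with hB | hB | hB
      · exact good_swapA (oneIn hA1 hB1 hB2 hB3 hu3 hB hw2 (d12 _ hB) (d13 _ hB) m1 m2 m3)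
      · exact good_swapA (good_swap12 (oneIn hA1 hB2 hB1 hB3 hu3 hB hw2
          (fun h => d12 _ h hB) (d23 _ hB) m2 m1 m3))
      · exact good_swapA (good_swap13 (oneIn hA1 hB3 hB2 hB1 hu3 hB hw2
          (fun h => d23 _ h hB) (fun h => d13 _ h hB) m3 m2 m1))
    · push_neg at h3
      obtain ⟨w3, hw3, hw3n⟩ := h3
      obtain ⟨n1, n2, n3⟩ := hw3n
      obtain ⟨b1, hb1⟩ := Finset.card_pos.mp (by omega : 0 < B1.card)
      obtain ⟨b2, hb2⟩ := Finset.card_pos.mp (by omega : 0 < B2.card)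
      exact master hA1 hB3 hw2 hw3 hb1 hb2
        (fun h => m1 (h ▸ hb1)) (fun h => m2 (h ▸ hb2)) m3
        (fun h => n1 (h ▸ hb1)) (fun h => n2 (h ▸ hb2)) n3

lemma key {A1 A2 A3 B1 B2 B3 : Finset ℕ}
    (hA1 : A1.card = 3) (hA2 : A2.card = 2) (hA3 : A3.card = 2)
    (hB1 : B1.card = 2) (hB2 : B2.card = 2) (hB3 : B3.card = 2) :
    Good A1 A2 A3 B1 B2 B3 := by
  by_cases hcom : ∃ c, c ∈ B1 ∧ c ∈ B2 ∧ c ∈ B3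
  · obtain ⟨c, h1, h2, h3⟩ := hcom
    refine ⟨c, h1, c, h2, c, h3, ?_, ?_, ?_⟩ <;>
    · apply not_subset_of_lt
      have : ({c, c, c} : Finset ℕ) = {c} := by ext y; simp
      rw [this]; simp; omega
  push_neg at hcom
  by_cases h12 : ∃ c, c ∈ B1 ∧ c ∈ B2
  · obtain ⟨c, h1, h2⟩ := h12
    exact pairCase hA1 hA2 hA3 hB1 hB2 hB3 h1 h2 (hcom c h1 h2)
  push_neg at h12
  by_cases h13 : ∃ c, c ∈ B1 ∧ c ∈ B3
  · obtain ⟨c, h1, h3⟩ := h13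
    exact good_swap23 (pairCase hA1 hA2 hA3 hB1 hB3 hB2 h1 h3 (h12 c h1))
  push_neg at h13
  by_cases h23 : ∃ c, c ∈ B2 ∧ c ∈ B3
  · obtain ⟨c, h2, h3⟩ := h23
    exact good_swap12 (good_swap23 (pairCase hA1 hA2 hA3 hB2 hB3 hB1 h2 h3 (fun h => h12 c h h2)))
  push_neg at h23
  exact disjCase hA1 hA2 hA3 hB1 hB2 hB3 h12 h13 h23

lemma build2 {M N : Fin 3 → Finset ℕ} (h : Good (M 0) (M 1) (M 2) (N 0) (N 1) (N 2)) :
    ∃ g h : Fin 3 → ℕ, (∀ w, g w ∈ M w) ∧ (∀ w, h w ∈ N w) ∧ ∀ w w', g w ≠ h w' := by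
  obtain ⟨b1, hb1, b2, hb2, b3, hb3, n1, n2, n3⟩ := h
  obtain ⟨a1, ha1, ha1n⟩ := Finset.not_subset.mp n1
  obtain ⟨a2, ha2, ha2n⟩ := Finset.not_subset.mp n2
  obtain ⟨a3, ha3, ha3n⟩ := Finset.not_subset.mp n3
  have k1 : ∀ c ∈ ({b1, b2, b3} : Finset ℕ), a1 ≠ c := fun c hc e => ha1n (e ▸ hc)
  have k2 : ∀ c ∈ ({b1, b2, b3} : Finset ℕ), a2 ≠ c := fun c hc e => ha2n (e ▸ hc)
  have k3 : ∀ c ∈ ({b1, b2, b3} : Finset ℕ), a3 ≠ c := fun c hc e => ha3n (e ▸ hc)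
  refine ⟨![a1, a2, a3], ![b1, b2, b3], ?_, ?_, ?_⟩
  · intro w; fin_cases w <;> simpa
  · intro w; fin_cases w <;> simpa
  · intro w w'
    fin_cases w <;> fin_cases w' <;> simp <;>
      first
        | exact k1 _ (by simp) | exact k2 _ (by simp) | exact k3 _ (by simp)

lemma half (M N : Fin 3 → Finset ℕ) (i : Fin 3) (h3 : (M i).card = 3)
    (h2 : ∀ w, w ≠ i → (M w).card = 2) (hN : ∀ w, (N w).card = 2) :
    ∃ g h : Fin 3 → ℕ, (∀ w, g w ∈ M w) ∧ (∀ w, h w ∈ N w) ∧ ∀ w w', g w ≠ h w' := by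
  have hswap : ∀ w : Fin 3, w ≠ 0 → Equiv.swap (0 : Fin 3) i w ≠ i := by
    intro w hw hEq
    have := (Equiv.swap (0 : Fin 3) i).injective
      (hEq.trans (Equiv.swap_apply_left (0 : Fin 3) i).symm)
    exact hw this
  obtain ⟨g, h, hg, hh, hne⟩ := build2 (M := fun w => M (Equiv.swap (0 : Fin 3) i w)) (N := N)
    (key (by simpa using h3) (h2 _ (hswap 1 (by decide))) (h2 _ (hswap 2 (by decide)))
      (hN 0) (hN 1) (hN 2))
  refine ⟨fun w => g (Equiv.swap (0 : Fin 3) i w), h, fun w => ?_, hh, fun w w' => hne _ w'⟩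
  have := hg (Equiv.swap (0 : Fin 3) i w)
  simpa [Equiv.swap_apply_self] using this

end K33

theorem stmt_2 (x : Fin 3 ⊕ Fin 3) (L : Fin 3 ⊕ Fin 3 → Finset ℕ)
    (hx : (L x).card = 3) (hrest : ∀ v, v ≠ x → (L v).card = 2) :
    ∃ f, properListColoring (completeBipartiteGraph (Fin 3) (Fin 3)) L f := by
  rcases x with i | i
  · obtain ⟨g, h, hg, hh, hne⟩ := K33.half (fun w => L (Sum.inl w)) (fun w => L (Sum.inr w)) i
      hx (fun w hw => hrest _ (by simpa using hw)) (fun w => hrest _ (by simp))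
    refine ⟨Sum.elim g h, ?_, ?_⟩
    · intro v; rcases v with w | w
      · exact hg w
      · exact hh w
    · intro u v hadj
      rcases u with w | w <;> rcases v with w' | w' <;> simp at hadj ⊢
      · exact hne w w'
      · exact (hne w' w).symm
  · obtain ⟨g, h, hg, hh, hne⟩ := K33.half (fun w => L (Sum.inr w)) (fun w => L (Sum.inl w)) i
      hx (fun w hw => hrest _ (by simpa using hw)) (fun w => hrest _ (by simp))
    refine ⟨Sum.elim h g, ?_, ?_⟩
    · intro v; rcases v with w | w
      · exact hh w
      · exact hg w
    · intro u v hadj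
      rcases u with w | w <;> rcases v with w' | w' <;> simp at hadj ⊢
      · exact (hne w' w).symm
      · exact hne w w'
end

section
/- The complete bipartite graph K_{3,7} is not (3,2)-choosable: there exists a list assignment L giving lists of size 3 to the vertices of the partite set of size 3 and lists of size 2 to the vertices of the partite set of size 7 such that K_{3,7} has no proper L-coloring. Explicitly, with X = {x_1,x_2,x_3} and Y = {y_1,...,y_7}, the assignment L(x_1)={1,2,3}, L(x_2)={1,3,4}, L(x_3)={2,4,5}, L(y_1)={1,2}, L(y_2)={1,4}, L(y_3)={1,5}, L(y_4)={2,3}, L(y_5)={2,4}, L(y_6)={3,4}, L(y_7)={3,5} admits no proper L-coloring. -/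
open Finset

def L37 : Fin 3 ⊕ Fin 7 → Finset ℕ :=
  Sum.elim ![{1,2,3}, {1,3,4}, {2,4,5}]
    ![{1,2}, {1,4}, {1,5}, {2,3}, {2,4}, {3,4}, {3,5}]

theorem stmt_3 : ¬ ∃ f, properListColoring (completeBipartiteGraph (Fin 3) (Fin 7)) L37 f := by
  rintro ⟨f, hmem, hadj⟩
  have hx : ∀ i j, f (Sum.inl i) ≠ f (Sum.inr j) := fun i j =>
    hadj _ _ (by simp)
  have key : ∀ a ∈ L37 (Sum.inl 0), ∀ b ∈ L37 (Sum.inl 1), ∀ c ∈ L37 (Sum.inl 2),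
      ∃ j : Fin 7, L37 (Sum.inr j) ⊆ {a, b, c} := by decide
  obtain ⟨j, hj⟩ := key _ (hmem (Sum.inl 0)) _ (hmem (Sum.inl 1)) _ (hmem (Sum.inl 2))
  have hmemj := hj (hmem (Sum.inr j))
  rw [mem_insert, mem_insert, mem_singleton] at hmemj
  rcases hmemj with h | h | h
  · exact hx 0 j h.symm
  · exact hx 1 j h.symm
  · exact hx 2 j h.symm
end

section
/- The complete bipartite graph K_{4,6} is not (2,3)-choosable: with X = {x_1,x_2,x_3,x_4} and Y = {y_1,...,y_6}, the list assignment L(x_1)={1,2}, L(x_2)={1,3}, L(x_3)={4,5}, L(x_4)={6,7}, L(y_1)={1,4,6}, L(y_2)={1,4,7}, L(y_3)={1,5,6}, L(y_4)={1,5,7}, L(y_5)={2,3,4}, L(y_6)={2,3,5} admits no proper L-coloring. -/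
open Finset

def L46 : Fin 4 ⊕ Fin 6 → Finset ℕ :=
  Sum.elim ![{1,2}, {1,3}, {4,5}, {6,7}]
    ![{1,4,6}, {1,4,7}, {1,5,6}, {1,5,7}, {2,3,4}, {2,3,5}]

theorem stmt_5 : ¬ ∃ f, properListColoring (completeBipartiteGraph (Fin 4) (Fin 6)) L46 f := by
  rintro ⟨f, hmem, hadj⟩
  have hx0 := hmem (Sum.inl 0); have hx1 := hmem (Sum.inl 1)
  have hx2 := hmem (Sum.inl 2); have hx3 := hmem (Sum.inl 3)
  simp [L46, Finset.mem_insert] at hx0 hx1 hx2 hx3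
  have ne : ∀ (i : Fin 4) (j : Fin 6), f (Sum.inl i) ≠ f (Sum.inr j) := fun i j =>
    hadj _ _ (by simp [completeBipartiteGraph])
  have hy : ∀ j, f (Sum.inr j) ∈ L46 (Sum.inr j) := fun j => hmem (Sum.inr j)
  have hy0 := hy 0; have hy1 := hy 1; have hy2 := hy 2; have hy3 := hy 3
  simp [L46, Finset.mem_insert] at hy0 hy1 hy2 hy3
  have hy4 : f (Sum.inr 4) = 2 ∨ f (Sum.inr 4) = 3 ∨ f (Sum.inr 4) = 4 := by
    have h := hy 4
    rw [show L46 (Sum.inr 4) = {2,3,4} from rfl] at h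
    simpa using h
  have hy5 : f (Sum.inr 5) = 2 ∨ f (Sum.inr 5) = 3 ∨ f (Sum.inr 5) = 5 := by
    have h := hy 5
    rw [show L46 (Sum.inr 5) = {2,3,5} from rfl] at h
    simpa using h
  have key : f (Sum.inl 0) = 1 ∨ f (Sum.inl 1) = 1 ∨
      (f (Sum.inl 0) = 2 ∧ f (Sum.inl 1) = 3) := by
    clear hy0 hy1 hy2 hy3 hy4 hy5; omega
  rcases hx2 with h2 | h2 <;> rcases hx3 with h3 | h3 <;>
      rcases key with h | h | ⟨ha, hb⟩
  · have := ne 0 0; have := ne 2 0; have := ne 3 0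
    clear hy1 hy2 hy3 hy4 hy5; omega
  · have := ne 1 0; have := ne 2 0; have := ne 3 0
    clear hy1 hy2 hy3 hy4 hy5; omega
  · have := ne 0 4; have := ne 1 4; have := ne 2 4
    clear hy0 hy1 hy2 hy3 hy5; omega
  · have := ne 0 1; have := ne 2 1; have := ne 3 1
    clear hy0 hy2 hy3 hy4 hy5; omega
  · have := ne 1 1; have := ne 2 1; have := ne 3 1
    clear hy0 hy2 hy3 hy4 hy5; omega
  · have := ne 0 4; have := ne 1 4; have := ne 2 4
    clear hy0 hy1 hy2 hy3 hy5; omega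
  · have := ne 0 2; have := ne 2 2; have := ne 3 2
    clear hy0 hy1 hy3 hy4 hy5; omega
  · have := ne 1 2; have := ne 2 2; have := ne 3 2
    clear hy0 hy1 hy3 hy4 hy5; omega
  · have := ne 0 5; have := ne 1 5; have := ne 2 5
    clear hy0 hy1 hy2 hy3 hy4; omega
  · have := ne 0 3; have := ne 2 3; have := ne 3 3
    clear hy0 hy1 hy2 hy4 hy5; omega
  · have := ne 1 3; have := ne 2 3; have := ne 3 3
    clear hy0 hy1 hy2 hy4 hy5; omega
  · have := ne 0 5; have := ne 1 5; have := ne 2 5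
    clear hy0 hy1 hy2 hy3 hy4; omega
end

section
/- The complete bipartite graph K_{3,6} is (3,2)-choosable: for every list assignment L giving each vertex of the size-3 partite set a list of size 3 and each vertex of the size-6 partite set a list of size 2, K_{3,6} has a proper L-coloring. -/
open Finset


lemma count_lemma (M1 M2 M3 : Finset ℕ) (hc1 : M1.card ≤ 3) (hc2 : M2.card ≤ 3)
    (hc3 : M3.card ≤ 3)
    (d12 : Disjoint M1 M2) (d13 : Disjoint M1 M3) (d23 : Disjoint M2 M3)
    (Y : Finset (Fin 6)) (P : Fin 6 → Finset ℕ) (hP : ∀ w, (P w).card = 2)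
    (hlt : 3 * Y.card < M1.card * M2.card * M3.card) :
    ∃ a ∈ M1, ∃ b ∈ M2, ∃ c ∈ M3, ∀ w ∈ Y, ¬ P w ⊆ {a, b, c} := by
  classical
  set T : Finset (ℕ × ℕ × ℕ) := M1 ×ˢ M2 ×ˢ M3 with hT
  have hTcard : T.card = M1.card * M2.card * M3.card := by
    simp [hT, Finset.card_product, mul_assoc]
  have hkill : ∀ w : Fin 6,
      (T.filter (fun t => P w ⊆ {t.1, t.2.1, t.2.2})).card ≤ 3 := by
    intro w
    obtain ⟨a, b, hab, hPw⟩ := Finset.card_eq_two.mp (hP w)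
    set K := T.filter (fun t => P w ⊆ {t.1, t.2.1, t.2.2}) with hK
    have hmemK : ∀ t ∈ K, t.1 ∈ M1 ∧ t.2.1 ∈ M2 ∧ t.2.2 ∈ M3 ∧
        (a = t.1 ∨ a = t.2.1 ∨ a = t.2.2) ∧ (b = t.1 ∨ b = t.2.1 ∨ b = t.2.2) := by
      intro t ht
      rw [hK, Finset.mem_filter] at ht
      obtain ⟨ht1, ht2⟩ := ht
      rw [hT, Finset.mem_product, Finset.mem_product] at ht1
      have ha : a ∈ ({t.1, t.2.1, t.2.2} : Finset ℕ) := ht2 (by simp [hPw])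
      have hb : b ∈ ({t.1, t.2.1, t.2.2} : Finset ℕ) := ht2 (by simp [hPw])
      simp only [Finset.mem_insert, Finset.mem_singleton] at ha hb
      exact ⟨ht1.1, ht1.2.1, ht1.2.2, ha, hb⟩
    have locate : ∀ x, ∀ t ∈ K, (x = t.1 ∨ x = t.2.1 ∨ x = t.2.2) →
        (x ∈ M1 → x = t.1) ∧ (x ∈ M2 → x = t.2.1) ∧ (x ∈ M3 → x = t.2.2) := by
      intro x t ht hx
      obtain ⟨h1, h2, h3, -, -⟩ := hmemK t ht
      refine ⟨?_, ?_, ?_⟩ <;> intro hm <;> rcases hx with h | h | h <;> subst h <;>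
        first
          | rfl
          | exact absurd (by assumption) (Finset.disjoint_left.mp d12 (by assumption))
          | exact absurd (by assumption) (Finset.disjoint_left.mp d13 (by assumption))
          | exact absurd (by assumption) (Finset.disjoint_left.mp d23 (by assumption))
    by_cases haM : a ∈ M1 ∨ a ∈ M2 ∨ a ∈ M3
    · by_cases hbM : b ∈ M1 ∨ b ∈ M2 ∨ b ∈ M3
      · rcases haM with ha | ha | ha <;> rcases hbM with hb | hb | hb
        -- (1,1)
        · have : K ⊆ ∅ := by
            intro t ht
            obtain ⟨-, -, -, ha', hb'⟩ := hmemK t ht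
            exact absurd (((locate a t ht ha').1 ha).trans
              ((locate b t ht hb').1 hb).symm) hab
          exact le_trans (Finset.card_le_card this) (by simp)
        -- (1,2)
        · have hsub : K ⊆ {a} ×ˢ {b} ×ˢ M3 := by
            intro t ht
            obtain ⟨-, -, h3, ha', hb'⟩ := hmemK t ht
            have e1 := (locate a t ht ha').1 ha
            have e2 := (locate b t ht hb').2.1 hb
            exact Finset.mem_product.mpr ⟨Finset.mem_singleton.mpr e1.symm,
              Finset.mem_product.mpr ⟨Finset.mem_singleton.mpr e2.symm, h3⟩⟩
          calc K.card ≤ _ := Finset.card_le_card hsub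
            _ ≤ 3 := by simpa using hc3
        -- (1,3)
        · have hsub : K ⊆ {a} ×ˢ M2 ×ˢ {b} := by
            intro t ht
            obtain ⟨-, h2, -, ha', hb'⟩ := hmemK t ht
            have e1 := (locate a t ht ha').1 ha
            have e2 := (locate b t ht hb').2.2 hb
            exact Finset.mem_product.mpr ⟨Finset.mem_singleton.mpr e1.symm,
              Finset.mem_product.mpr ⟨h2, Finset.mem_singleton.mpr e2.symm⟩⟩
          calc K.card ≤ _ := Finset.card_le_card hsub
            _ ≤ 3 := by simpa using hc2
        -- (2,1)
        · have hsub : K ⊆ {b} ×ˢ {a} ×ˢ M3 := by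
            intro t ht
            obtain ⟨-, -, h3, ha', hb'⟩ := hmemK t ht
            have e1 := (locate a t ht ha').2.1 ha
            have e2 := (locate b t ht hb').1 hb
            exact Finset.mem_product.mpr ⟨Finset.mem_singleton.mpr e2.symm,
              Finset.mem_product.mpr ⟨Finset.mem_singleton.mpr e1.symm, h3⟩⟩
          calc K.card ≤ _ := Finset.card_le_card hsub
            _ ≤ 3 := by simpa using hc3
        -- (2,2)
        · have : K ⊆ ∅ := by
            intro t ht
            obtain ⟨-, -, -, ha', hb'⟩ := hmemK t ht
            exact absurd (((locate a t ht ha').2.1 ha).trans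
              ((locate b t ht hb').2.1 hb).symm) hab
          exact le_trans (Finset.card_le_card this) (by simp)
        -- (2,3)
        · have hsub : K ⊆ M1 ×ˢ {a} ×ˢ {b} := by
            intro t ht
            obtain ⟨h1, -, -, ha', hb'⟩ := hmemK t ht
            have e1 := (locate a t ht ha').2.1 ha
            have e2 := (locate b t ht hb').2.2 hb
            exact Finset.mem_product.mpr ⟨h1,
              Finset.mem_product.mpr ⟨Finset.mem_singleton.mpr e1.symm,
                Finset.mem_singleton.mpr e2.symm⟩⟩
          calc K.card ≤ _ := Finset.card_le_card hsub
            _ ≤ 3 := by simpa using hc1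
        -- (3,1)
        · have hsub : K ⊆ {b} ×ˢ M2 ×ˢ {a} := by
            intro t ht
            obtain ⟨-, h2, -, ha', hb'⟩ := hmemK t ht
            have e1 := (locate a t ht ha').2.2 ha
            have e2 := (locate b t ht hb').1 hb
            exact Finset.mem_product.mpr ⟨Finset.mem_singleton.mpr e2.symm,
              Finset.mem_product.mpr ⟨h2, Finset.mem_singleton.mpr e1.symm⟩⟩
          calc K.card ≤ _ := Finset.card_le_card hsub
            _ ≤ 3 := by simpa using hc2
        -- (3,2)
        · have hsub : K ⊆ M1 ×ˢ {b} ×ˢ {a} := by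
            intro t ht
            obtain ⟨h1, -, -, ha', hb'⟩ := hmemK t ht
            have e1 := (locate a t ht ha').2.2 ha
            have e2 := (locate b t ht hb').2.1 hb
            exact Finset.mem_product.mpr ⟨h1,
              Finset.mem_product.mpr ⟨Finset.mem_singleton.mpr e2.symm,
                Finset.mem_singleton.mpr e1.symm⟩⟩
          calc K.card ≤ _ := Finset.card_le_card hsub
            _ ≤ 3 := by simpa using hc1
        -- (3,3)
        · have : K ⊆ ∅ := by
            intro t ht
            obtain ⟨-, -, -, ha', hb'⟩ := hmemK t ht
            exact absurd (((locate a t ht ha').2.2 ha).trans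
              ((locate b t ht hb').2.2 hb).symm) hab
          exact le_trans (Finset.card_le_card this) (by simp)
      · have : K ⊆ ∅ := by
          intro t ht
          obtain ⟨h1, h2, h3, -, hb'⟩ := hmemK t ht
          push_neg at hbM
          rcases hb' with h | h | h <;> subst h <;> tauto
        exact le_trans (Finset.card_le_card this) (by simp)
    · have : K ⊆ ∅ := by
        intro t ht
        obtain ⟨h1, h2, h3, ha', -⟩ := hmemK t ht
        push_neg at haM
        rcases ha' with h | h | h <;> subst h <;> tauto
      exact le_trans (Finset.card_le_card this) (by simp)
  -- main counting
  set Bad := T.filter (fun t => ∃ w ∈ Y, P w ⊆ {t.1, t.2.1, t.2.2}) with hBad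
  have hBadsub : Bad ⊆ Y.biUnion (fun w => T.filter (fun t => P w ⊆ {t.1, t.2.1, t.2.2})) := by
    intro t ht
    rw [hBad, Finset.mem_filter] at ht
    obtain ⟨ht1, w, hw, hw2⟩ := ht
    exact Finset.mem_biUnion.mpr ⟨w, hw, Finset.mem_filter.mpr ⟨ht1, hw2⟩⟩
  have hBadcard : Bad.card ≤ 3 * Y.card := by
    calc Bad.card ≤ _ := Finset.card_le_card hBadsub
      _ ≤ ∑ w ∈ Y, (T.filter (fun t => P w ⊆ {t.1, t.2.1, t.2.2})).card :=
          Finset.card_biUnion_le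
      _ ≤ ∑ _w ∈ Y, 3 := Finset.sum_le_sum (fun w _ => hkill w)
      _ = 3 * Y.card := by rw [Finset.sum_const, smul_eq_mul, mul_comm]
  have : ∃ t ∈ T, t ∉ Bad := by
    by_contra h
    push_neg at h
    have := Finset.card_le_card h
    omega
  obtain ⟨t, htT, htB⟩ := this
  rw [hT, Finset.mem_product, Finset.mem_product] at htT
  refine ⟨t.1, htT.1, t.2.1, htT.2.1, t.2.2, htT.2.2, fun w hw hsub => ?_⟩
  have htT' : t ∈ T := by
    rw [hT]
    exact Finset.mem_product.mpr ⟨htT.1, Finset.mem_product.mpr ⟨htT.2.1, htT.2.2⟩⟩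
  exact htB (Finset.mem_filter.mpr ⟨htT', w, hw, hsub⟩)


lemma pair_eq {p : Finset ℕ} (hp : p.card = 2) {x c : ℕ} (h : p ⊆ {x, c}) :
    p = {x, c} :=
  Finset.eq_of_subset_of_card_le h (by
    calc ({x, c} : Finset ℕ).card ≤ ({c} : Finset ℕ).card + 1 :=
          Finset.card_insert_le x {c}
      _ ≤ 2 := by simp
      _ = p.card := hp.symm)

lemma fam_card {L : Finset ℕ} (h3 : L.card = 3) {x : ℕ} (hx : x ∉ L) :
    (L.image (fun c => ({x, c} : Finset ℕ))).card = 3 := by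
  rw [Finset.card_image_of_injOn, h3]
  intro c hc c' hc' heq
  have hcx : x ∉ ({c} : Finset ℕ) := by
    simp only [Finset.mem_singleton]
    rintro rfl; exact hx hc
  have hcx' : x ∉ ({c'} : Finset ℕ) := by
    simp only [Finset.mem_singleton]
    rintro rfl; exact hx hc'
  have := congrArg (fun s => Finset.erase s x) heq
  simp only [Finset.erase_insert hcx, Finset.erase_insert hcx'] at this
  exact Finset.singleton_injective this

lemma fam_inter {A B : Finset ℕ} {x y : ℕ} (hxy : x ≠ y) :
    (A.image fun c => ({x, c} : Finset ℕ)) ∩ (B.image fun c => ({y, c} : Finset ℕ))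
      ⊆ {({x, y} : Finset ℕ)} := by
  intro p hp
  rw [Finset.mem_inter] at hp
  obtain ⟨hp1, hp2⟩ := hp
  rw [Finset.mem_image] at hp1 hp2
  obtain ⟨c, hc, rfl⟩ := hp1
  obtain ⟨d, hd, heq⟩ := hp2
  have hy : y ∈ ({x, c} : Finset ℕ) := by rw [← heq]; simp
  rw [Finset.mem_insert, Finset.mem_singleton] at hy
  rcases hy with hy | hy
  · exact absurd hy.symm hxy
  · subst hy
    simp

lemma twoShared (L1 L2 L3 : Finset ℕ) (h1 : L1.card = 3) (h2 : L2.card = 3)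
    (h3 : L3.card = 3) (P : Fin 6 → Finset ℕ) (hP : ∀ w, (P w).card = 2)
    (x x' : ℕ) (hxx : x ≠ x') (hx1 : x ∈ L1) (hx2 : x ∈ L2)
    (hx'1 : x' ∈ L1) (hx'2 : x' ∈ L2) (hx3 : x ∉ L3) (hx'3 : x' ∉ L3) :
    ∃ a ∈ L1, ∃ b ∈ L2, ∃ c ∈ L3, ∀ w, ¬ P w ⊆ {a, b, c} := by
  classical
  by_cases hesc : ∃ c ∈ L3, ∀ w, P w ≠ {x, c}
  · obtain ⟨c, hc, hne⟩ := hesc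
    refine ⟨x, hx1, x, hx2, c, hc, fun w hsub => hne w (pair_eq (hP w) ?_)⟩
    simpa using hsub
  by_cases hesc' : ∃ c ∈ L3, ∀ w, P w ≠ {x', c}
  · obtain ⟨c, hc, hne⟩ := hesc'
    refine ⟨x', hx'1, x', hx'2, c, hc, fun w hsub => hne w (pair_eq (hP w) ?_)⟩
    simpa using hsub
  push_neg at hesc hesc'
  set F1 := L3.image (fun c => ({x, c} : Finset ℕ)) with hF1
  set F2 := L3.image (fun c => ({x', c} : Finset ℕ)) with hF2
  have hd : Disjoint F1 F2 := by
    rw [Finset.disjoint_left]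
    intro p hp1 hp2
    rw [hF1, Finset.mem_image] at hp1
    rw [hF2, Finset.mem_image] at hp2
    obtain ⟨c, hc, rfl⟩ := hp1
    obtain ⟨d, hd', heq⟩ := hp2
    have : x ∈ ({x', d} : Finset ℕ) := by rw [heq]; simp
    rw [Finset.mem_insert, Finset.mem_singleton] at this
    rcases this with h | h
    · exact hxx h
    · subst h; exact hx3 hd'
  have hFcard : (F1 ∪ F2).card = 6 := by
    rw [Finset.card_union_of_disjoint hd, fam_card h3 hx3, fam_card h3 hx'3]
  have hFsub : F1 ∪ F2 ⊆ Finset.univ.image P := by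
    intro p hp
    rw [Finset.mem_union] at hp
    rcases hp with hp | hp <;> rw [Finset.mem_image] at hp <;>
      obtain ⟨c, hc, rfl⟩ := hp
    · obtain ⟨w, hw⟩ := hesc c hc
      exact Finset.mem_image.mpr ⟨w, Finset.mem_univ w, hw⟩
    · obtain ⟨w, hw⟩ := hesc' c hc
      exact Finset.mem_image.mpr ⟨w, Finset.mem_univ w, hw⟩
  have hEq : F1 ∪ F2 = Finset.univ.image P := by
    refine Finset.eq_of_subset_of_card_le hFsub ?_
    rw [hFcard]
    calc (Finset.univ.image P).card ≤ (Finset.univ : Finset (Fin 6)).card :=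
          Finset.card_image_le
      _ = 6 := by simp
  have hmem : ∀ w, x ∈ P w ∨ x' ∈ P w := by
    intro w
    have : P w ∈ F1 ∪ F2 := by
      rw [hEq]; exact Finset.mem_image_of_mem P (Finset.mem_univ w)
    rw [Finset.mem_union] at this
    rcases this with h | h <;> rw [Finset.mem_image] at h <;>
      obtain ⟨c, hc, heq⟩ := h
    · left; rw [← heq]; simp
    · right; rw [← heq]; simp
  have hxx2 : ({x, x'} : Finset ℕ).card = 2 := by
    rw [Finset.card_insert_of_notMem (by simpa using hxx), Finset.card_singleton]
  have hA : (L1 \ {x, x'}).Nonempty := by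
    rw [← Finset.card_pos, Finset.card_sdiff_of_subset (by
      intro z hz
      rw [Finset.mem_insert, Finset.mem_singleton] at hz
      rcases hz with rfl | rfl <;> assumption), h1, hxx2]
    norm_num
  have hB : (L2 \ {x, x'}).Nonempty := by
    rw [← Finset.card_pos, Finset.card_sdiff_of_subset (by
      intro z hz
      rw [Finset.mem_insert, Finset.mem_singleton] at hz
      rcases hz with rfl | rfl <;> assumption), h2, hxx2]
    norm_num
  have hC : L3.Nonempty := by rw [← Finset.card_pos, h3]; norm_num
  obtain ⟨a, ha⟩ := hA
  obtain ⟨b, hb⟩ := hB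
  obtain ⟨c, hc⟩ := hC
  rw [Finset.mem_sdiff, Finset.mem_insert, Finset.mem_singleton] at ha hb
  push_neg at ha hb
  refine ⟨a, ha.1, b, hb.1, c, hc, fun w hsub => ?_⟩
  rcases hmem w with h | h
  · have := hsub h
    rw [Finset.mem_insert, Finset.mem_insert, Finset.mem_singleton] at this
    rcases this with rfl | rfl | rfl
    · exact ha.2.1 rfl
    · exact hb.2.1 rfl
    · exact hx3 hc
  · have := hsub h
    rw [Finset.mem_insert, Finset.mem_insert, Finset.mem_singleton] at this
    rcases this with rfl | rfl | rfl
    · exact ha.2.2 rfl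
    · exact hb.2.2 rfl
    · exact hx'3 hc

lemma k1_lemma (L1 L2 L3 : Finset ℕ) (h1 : L1.card = 3) (h2 : L2.card = 3)
    (h3 : L3.card = 3) (P : Fin 6 → Finset ℕ) (hP : ∀ w, (P w).card = 2)
    (x : ℕ) (hI12 : L1 ∩ L2 = {x}) (hI13 : L1 ∩ L3 = ∅) (hI23 : L2 ∩ L3 = ∅)
    (hx3 : x ∉ L3) :
    ∃ a ∈ L1, ∃ b ∈ L2, ∃ c ∈ L3, ∀ w, ¬ P w ⊆ {a, b, c} := by
  classical
  have hxI : x ∈ L1 ∩ L2 := by rw [hI12]; simp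
  rw [Finset.mem_inter] at hxI
  by_cases hesc : ∃ c ∈ L3, ∀ w, P w ≠ {x, c}
  · obtain ⟨c, hc, hne⟩ := hesc
    refine ⟨x, hxI.1, x, hxI.2, c, hc, fun w hsub => hne w (pair_eq (hP w) ?_)⟩
    simpa using hsub
  push_neg at hesc
  set Yc := Finset.univ.filter (fun w => x ∈ P w) with hYc
  set Y := (Finset.univ : Finset (Fin 6)) \ Yc with hY
  have hYccard : 3 ≤ Yc.card := by
    have hsubm : L3.image (fun c => ({x, c} : Finset ℕ)) ⊆ Yc.image P := by
      intro p hp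
      rw [Finset.mem_image] at hp
      obtain ⟨c, hc, rfl⟩ := hp
      obtain ⟨w, hw⟩ := hesc c hc
      refine Finset.mem_image.mpr ⟨w, ?_, hw⟩
      rw [hYc, Finset.mem_filter]
      exact ⟨Finset.mem_univ w, by rw [hw]; simp⟩
    calc 3 = (L3.image (fun c => ({x, c} : Finset ℕ))).card := (fam_card h3 hx3).symm
      _ ≤ (Yc.image P).card := Finset.card_le_card hsubm
      _ ≤ Yc.card := Finset.card_image_le
  have hYcard : Y.card ≤ 3 := by
    rw [hY, Finset.card_sdiff_of_subset (Finset.subset_univ Yc)]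
    simp only [Finset.card_univ, Fintype.card_fin]
    omega
  have hm1 : (L1.erase x).card = 2 := by rw [Finset.card_erase_of_mem hxI.1, h1]
  have hm2 : (L2.erase x).card = 2 := by rw [Finset.card_erase_of_mem hxI.2, h2]
  obtain ⟨a, ha, b, hb, c, hc, hgood⟩ :=
    count_lemma (L1.erase x) (L2.erase x) L3 (by omega) (by omega) (by omega)
      (by
        rw [Finset.disjoint_left]
        intro z hz1 hz2
        have : z ∈ L1 ∩ L2 :=
          Finset.mem_inter.mpr ⟨Finset.mem_of_mem_erase hz1, Finset.mem_of_mem_erase hz2⟩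
        rw [hI12, Finset.mem_singleton] at this
        exact Finset.ne_of_mem_erase hz1 this)
      (by
        rw [Finset.disjoint_left]
        intro z hz1 hz2
        have : z ∈ L1 ∩ L3 := Finset.mem_inter.mpr ⟨Finset.mem_of_mem_erase hz1, hz2⟩
        rw [hI13] at this
        exact absurd this (Finset.notMem_empty z))
      (by
        rw [Finset.disjoint_left]
        intro z hz1 hz2
        have : z ∈ L2 ∩ L3 := Finset.mem_inter.mpr ⟨Finset.mem_of_mem_erase hz1, hz2⟩
        rw [hI23] at this
        exact absurd this (Finset.notMem_empty z))
      Y P hP (by rw [hm1, hm2, h3]; omega)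
  refine ⟨a, Finset.mem_of_mem_erase ha, b, Finset.mem_of_mem_erase hb, c, hc,
    fun w hsub => ?_⟩
  by_cases hxw : x ∈ P w
  · have := hsub hxw
    rw [Finset.mem_insert, Finset.mem_insert, Finset.mem_singleton] at this
    rcases this with rfl | rfl | rfl
    · exact Finset.notMem_erase x L1 ha
    · exact Finset.notMem_erase x L2 hb
    · exact hx3 hc
  · refine hgood w ?_ hsub
    rw [hY, Finset.mem_sdiff]
    refine ⟨Finset.mem_univ w, ?_⟩
    rw [hYc, Finset.mem_filter]
    tauto

lemma k2_lemma (L1 L2 L3 : Finset ℕ) (h1 : L1.card = 3) (h2 : L2.card = 3)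
    (h3 : L3.card = 3) (P : Fin 6 → Finset ℕ) (hP : ∀ w, (P w).card = 2)
    (x y : ℕ) (hI12 : L1 ∩ L2 = {x}) (hI13 : L1 ∩ L3 = {y}) (hI23 : L2 ∩ L3 = ∅)
    (hx3 : x ∉ L3) (hy2 : y ∉ L2) :
    ∃ a ∈ L1, ∃ b ∈ L2, ∃ c ∈ L3, ∀ w, ¬ P w ⊆ {a, b, c} := by
  classical
  have hxI : x ∈ L1 ∩ L2 := by rw [hI12]; simp
  have hyI : y ∈ L1 ∩ L3 := by rw [hI13]; simp
  rw [Finset.mem_inter] at hxI hyI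
  have hxy : x ≠ y := fun h => hx3 (h ▸ hyI.2)
  by_cases hesc : ∃ c ∈ L3, ∀ w, P w ≠ {x, c}
  · obtain ⟨c, hc, hne⟩ := hesc
    refine ⟨x, hxI.1, x, hxI.2, c, hc, fun w hsub => hne w (pair_eq (hP w) ?_)⟩
    simpa using hsub
  by_cases hesc' : ∃ b ∈ L2, ∀ w, P w ≠ {y, b}
  · obtain ⟨b, hb, hne⟩ := hesc'
    refine ⟨y, hyI.1, b, hb, y, hyI.2, fun w hsub => hne w (pair_eq (hP w) ?_)⟩
    have hset : ({y, b, y} : Finset ℕ) ⊆ {y, b} := by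
      intro t ht
      simp only [Finset.mem_insert, Finset.mem_singleton] at ht ⊢
      tauto
    exact hsub.trans hset
  push_neg at hesc hesc'
  set F1 := L3.image (fun c => ({x, c} : Finset ℕ)) with hF1
  set F2 := L2.image (fun c => ({y, c} : Finset ℕ)) with hF2
  have hFcard : 5 ≤ (F1 ∪ F2).card := by
    have h5 : (F1 ∩ F2).card ≤ 1 := by
      calc (F1 ∩ F2).card ≤ ({({x, y} : Finset ℕ)} : Finset (Finset ℕ)).card :=
            Finset.card_le_card (fam_inter hxy)
        _ = 1 := Finset.card_singleton _
    have := Finset.card_union_add_card_inter F1 F2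
    rw [fam_card h3 hx3, fam_card h2 hy2] at this
    omega
  set Yc := Finset.univ.filter (fun w => x ∈ P w ∨ y ∈ P w) with hYc
  set Y := (Finset.univ : Finset (Fin 6)) \ Yc with hY
  have hYccard : 5 ≤ Yc.card := by
    have hsubm : F1 ∪ F2 ⊆ Yc.image P := by
      intro p hp
      rw [Finset.mem_union] at hp
      rcases hp with hp | hp <;> rw [Finset.mem_image] at hp <;>
        obtain ⟨c, hc, rfl⟩ := hp
      · obtain ⟨w, hw⟩ := hesc c hc
        refine Finset.mem_image.mpr ⟨w, ?_, hw⟩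
        rw [hYc, Finset.mem_filter]
        exact ⟨Finset.mem_univ w, Or.inl (by rw [hw]; simp)⟩
      · obtain ⟨w, hw⟩ := hesc' c hc
        refine Finset.mem_image.mpr ⟨w, ?_, hw⟩
        rw [hYc, Finset.mem_filter]
        exact ⟨Finset.mem_univ w, Or.inr (by rw [hw]; simp)⟩
    calc 5 ≤ (F1 ∪ F2).card := hFcard
      _ ≤ (Yc.image P).card := Finset.card_le_card hsubm
      _ ≤ Yc.card := Finset.card_image_le
  have hYcard : Y.card ≤ 1 := by
    rw [hY, Finset.card_sdiff_of_subset (Finset.subset_univ Yc)]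
    have : Yc.card ≤ 6 := le_trans (Finset.card_le_univ Yc) (by simp)
    simp only [Finset.card_univ, Fintype.card_fin]
    omega
  have hsub1 : ({x, y} : Finset ℕ) ⊆ L1 := by
    intro z hz
    rw [Finset.mem_insert, Finset.mem_singleton] at hz
    rcases hz with rfl | rfl
    · exact hxI.1
    · exact hyI.1
  have hm1 : (L1 \ {x, y}).card = 1 := by
    rw [Finset.card_sdiff_of_subset hsub1, h1,
      Finset.card_insert_of_notMem (by simpa using hxy), Finset.card_singleton]
  have hm2 : (L2.erase x).card = 2 := by rw [Finset.card_erase_of_mem hxI.2, h2]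
  have hm3 : (L3.erase y).card = 2 := by rw [Finset.card_erase_of_mem hyI.2, h3]
  obtain ⟨a, ha, b, hb, c, hc, hgood⟩ :=
    count_lemma (L1 \ {x, y}) (L2.erase x) (L3.erase y) (by omega) (by omega) (by omega)
      (by
        rw [Finset.disjoint_left]
        intro z hz1 hz2
        rw [Finset.mem_sdiff] at hz1
        have : z ∈ L1 ∩ L2 := Finset.mem_inter.mpr ⟨hz1.1, Finset.mem_of_mem_erase hz2⟩
        rw [hI12, Finset.mem_singleton] at this
        exact hz1.2 (by simp [this]))
      (by
        rw [Finset.disjoint_left]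
        intro z hz1 hz2
        rw [Finset.mem_sdiff] at hz1
        have : z ∈ L1 ∩ L3 := Finset.mem_inter.mpr ⟨hz1.1, Finset.mem_of_mem_erase hz2⟩
        rw [hI13, Finset.mem_singleton] at this
        exact hz1.2 (by simp [this]))
      (by
        rw [Finset.disjoint_left]
        intro z hz1 hz2
        have : z ∈ L2 ∩ L3 := Finset.mem_inter.mpr
          ⟨Finset.mem_of_mem_erase hz1, Finset.mem_of_mem_erase hz2⟩
        rw [hI23] at this
        exact absurd this (Finset.notMem_empty z))
      Y P hP (by rw [hm1, hm2, hm3]; omega)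
  rw [Finset.mem_sdiff] at ha
  refine ⟨a, ha.1, b, Finset.mem_of_mem_erase hb, c, Finset.mem_of_mem_erase hc,
    fun w hsub => ?_⟩
  by_cases hw : x ∈ P w ∨ y ∈ P w
  · have hax : a ≠ x := fun h => ha.2 (by simp [h])
    have hay : a ≠ y := fun h => ha.2 (by simp [h])
    rcases hw with hw | hw
    · have := hsub hw
      rw [Finset.mem_insert, Finset.mem_insert, Finset.mem_singleton] at this
      rcases this with rfl | rfl | rfl
      · exact hax rfl
      · exact Finset.notMem_erase x L2 hb
      · exact hx3 (Finset.mem_of_mem_erase hc)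
    · have := hsub hw
      rw [Finset.mem_insert, Finset.mem_insert, Finset.mem_singleton] at this
      rcases this with rfl | rfl | rfl
      · exact hay rfl
      · exact hy2 (Finset.mem_of_mem_erase hb)
      · exact Finset.notMem_erase y L3 hc
  · refine hgood w ?_ hsub
    rw [hY, Finset.mem_sdiff]
    refine ⟨Finset.mem_univ w, ?_⟩
    rw [hYc, Finset.mem_filter]
    tauto

lemma k3_lemma (L1 L2 L3 : Finset ℕ) (h1 : L1.card = 3) (h2 : L2.card = 3)
    (h3 : L3.card = 3) (P : Fin 6 → Finset ℕ) (hP : ∀ w, (P w).card = 2)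
    (x y z : ℕ) (hI12 : L1 ∩ L2 = {x}) (hI13 : L1 ∩ L3 = {y}) (hI23 : L2 ∩ L3 = {z})
    (hx3 : x ∉ L3) (hy2 : y ∉ L2) (hz1 : z ∉ L1) :
    ∃ a ∈ L1, ∃ b ∈ L2, ∃ c ∈ L3, ∀ w, ¬ P w ⊆ {a, b, c} := by
  classical
  have hxI : x ∈ L1 ∩ L2 := by rw [hI12]; simp
  have hyI : y ∈ L1 ∩ L3 := by rw [hI13]; simp
  have hzI : z ∈ L2 ∩ L3 := by rw [hI23]; simp
  rw [Finset.mem_inter] at hxI hyI hzI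
  have hxy : x ≠ y := fun h => hx3 (h ▸ hyI.2)
  have hxz : x ≠ z := fun h => hx3 (h ▸ hzI.2)
  have hyz : y ≠ z := fun h => hy2 (h ▸ hzI.1)
  by_cases hesc : ∃ c ∈ L3, ∀ w, P w ≠ {x, c}
  · obtain ⟨c, hc, hne⟩ := hesc
    refine ⟨x, hxI.1, x, hxI.2, c, hc, fun w hsub => hne w (pair_eq (hP w) ?_)⟩
    simpa using hsub
  by_cases hesc' : ∃ b ∈ L2, ∀ w, P w ≠ {y, b}
  · obtain ⟨b, hb, hne⟩ := hesc'
    refine ⟨y, hyI.1, b, hb, y, hyI.2, fun w hsub => hne w (pair_eq (hP w) ?_)⟩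
    have hset : ({y, b, y} : Finset ℕ) ⊆ {y, b} := by
      intro t ht
      simp only [Finset.mem_insert, Finset.mem_singleton] at ht ⊢
      tauto
    exact hsub.trans hset
  by_cases hesc'' : ∃ a ∈ L1, ∀ w, P w ≠ {z, a}
  · obtain ⟨a, ha, hne⟩ := hesc''
    refine ⟨a, ha, z, hzI.1, z, hzI.2, fun w hsub => hne w (pair_eq (hP w) ?_)⟩
    have hset : ({a, z, z} : Finset ℕ) ⊆ {z, a} := by
      intro t ht
      simp only [Finset.mem_insert, Finset.mem_singleton] at ht ⊢
      tauto
    exact hsub.trans hset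
  push_neg at hesc hesc' hesc''
  set F1 := L3.image (fun c => ({x, c} : Finset ℕ)) with hF1
  set F2 := L2.image (fun c => ({y, c} : Finset ℕ)) with hF2
  set F3 := L1.image (fun c => ({z, c} : Finset ℕ)) with hF3
  have hF12 : 5 ≤ (F1 ∪ F2).card := by
    have h5 : (F1 ∩ F2).card ≤ 1 := by
      calc (F1 ∩ F2).card ≤ ({({x, y} : Finset ℕ)} : Finset (Finset ℕ)).card :=
            Finset.card_le_card (fam_inter hxy)
        _ = 1 := Finset.card_singleton _
    have := Finset.card_union_add_card_inter F1 F2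
    rw [fam_card h3 hx3, fam_card h2 hy2] at this
    omega
  have hF123 : 6 ≤ (F1 ∪ F2 ∪ F3).card := by
    have hint : ((F1 ∪ F2) ∩ F3).card ≤ 2 := by
      have hd : (F1 ∪ F2) ∩ F3 = (F1 ∩ F3) ∪ (F2 ∩ F3) := Finset.union_inter_distrib_right _ _ _
      rw [hd]
      calc ((F1 ∩ F3) ∪ (F2 ∩ F3)).card ≤ (F1 ∩ F3).card + (F2 ∩ F3).card :=
            Finset.card_union_le _ _
        _ ≤ 1 + 1 := by
            gcongr
            · calc (F1 ∩ F3).card ≤ ({({x, z} : Finset ℕ)} : Finset (Finset ℕ)).card :=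
                  Finset.card_le_card (fam_inter hxz)
                _ = 1 := Finset.card_singleton _
            · calc (F2 ∩ F3).card ≤ ({({y, z} : Finset ℕ)} : Finset (Finset ℕ)).card :=
                  Finset.card_le_card (fam_inter hyz)
                _ = 1 := Finset.card_singleton _
        _ = 2 := rfl
    have := Finset.card_union_add_card_inter (F1 ∪ F2) F3
    rw [fam_card h1 hz1] at this
    omega
  set Yc := Finset.univ.filter (fun w => x ∈ P w ∨ y ∈ P w ∨ z ∈ P w) with hYc
  set Y := (Finset.univ : Finset (Fin 6)) \ Yc with hY
  have hYccard : 6 ≤ Yc.card := by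
    have hsubm : F1 ∪ F2 ∪ F3 ⊆ Yc.image P := by
      intro p hp
      rw [Finset.mem_union, Finset.mem_union] at hp
      rcases hp with (hp | hp) | hp <;> rw [Finset.mem_image] at hp <;>
        obtain ⟨c, hc, rfl⟩ := hp
      · obtain ⟨w, hw⟩ := hesc c hc
        refine Finset.mem_image.mpr ⟨w, ?_, hw⟩
        rw [hYc, Finset.mem_filter]
        exact ⟨Finset.mem_univ w, Or.inl (by rw [hw]; simp)⟩
      · obtain ⟨w, hw⟩ := hesc' c hc
        refine Finset.mem_image.mpr ⟨w, ?_, hw⟩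
        rw [hYc, Finset.mem_filter]
        exact ⟨Finset.mem_univ w, Or.inr (Or.inl (by rw [hw]; simp))⟩
      · obtain ⟨w, hw⟩ := hesc'' c hc
        refine Finset.mem_image.mpr ⟨w, ?_, hw⟩
        rw [hYc, Finset.mem_filter]
        exact ⟨Finset.mem_univ w, Or.inr (Or.inr (by rw [hw]; simp))⟩
    calc 6 ≤ (F1 ∪ F2 ∪ F3).card := hF123
      _ ≤ (Yc.image P).card := Finset.card_le_card hsubm
      _ ≤ Yc.card := Finset.card_image_le
  have hYcard : Y.card = 0 := by
    rw [hY, Finset.card_sdiff_of_subset (Finset.subset_univ Yc)]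
    have : Yc.card ≤ 6 := le_trans (Finset.card_le_univ Yc) (by simp)
    simp only [Finset.card_univ, Fintype.card_fin]
    omega
  have hsub1 : ({x, y} : Finset ℕ) ⊆ L1 := by
    intro t ht
    rw [Finset.mem_insert, Finset.mem_singleton] at ht
    rcases ht with rfl | rfl
    · exact hxI.1
    · exact hyI.1
  have hsub2 : ({x, z} : Finset ℕ) ⊆ L2 := by
    intro t ht
    rw [Finset.mem_insert, Finset.mem_singleton] at ht
    rcases ht with rfl | rfl
    · exact hxI.2
    · exact hzI.1
  have hsub3 : ({y, z} : Finset ℕ) ⊆ L3 := by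
    intro t ht
    rw [Finset.mem_insert, Finset.mem_singleton] at ht
    rcases ht with rfl | rfl
    · exact hyI.2
    · exact hzI.2
  have hm1 : (L1 \ {x, y}).card = 1 := by
    rw [Finset.card_sdiff_of_subset hsub1, h1,
      Finset.card_insert_of_notMem (by simpa using hxy), Finset.card_singleton]
  have hm2 : (L2 \ {x, z}).card = 1 := by
    rw [Finset.card_sdiff_of_subset hsub2, h2,
      Finset.card_insert_of_notMem (by simpa using hxz), Finset.card_singleton]
  have hm3 : (L3 \ {y, z}).card = 1 := by
    rw [Finset.card_sdiff_of_subset hsub3, h3,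
      Finset.card_insert_of_notMem (by simpa using hyz), Finset.card_singleton]
  obtain ⟨a, ha, b, hb, c, hc, hgood⟩ :=
    count_lemma (L1 \ {x, y}) (L2 \ {x, z}) (L3 \ {y, z}) (by omega) (by omega) (by omega)
      (by
        rw [Finset.disjoint_left]
        intro t ht1 ht2
        rw [Finset.mem_sdiff] at ht1 ht2
        have : t ∈ L1 ∩ L2 := Finset.mem_inter.mpr ⟨ht1.1, ht2.1⟩
        rw [hI12, Finset.mem_singleton] at this
        exact ht1.2 (by simp [this]))
      (by
        rw [Finset.disjoint_left]
        intro t ht1 ht2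
        rw [Finset.mem_sdiff] at ht1 ht2
        have : t ∈ L1 ∩ L3 := Finset.mem_inter.mpr ⟨ht1.1, ht2.1⟩
        rw [hI13, Finset.mem_singleton] at this
        exact ht1.2 (by simp [this]))
      (by
        rw [Finset.disjoint_left]
        intro t ht1 ht2
        rw [Finset.mem_sdiff] at ht1 ht2
        have : t ∈ L2 ∩ L3 := Finset.mem_inter.mpr ⟨ht1.1, ht2.1⟩
        rw [hI23, Finset.mem_singleton] at this
        exact ht1.2 (by simp [this]))
      Y P hP (by rw [hm1, hm2, hm3, hYcard]; omega)
  rw [Finset.mem_sdiff] at ha hb hc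
  simp only [Finset.mem_insert, Finset.mem_singleton] at ha hb hc
  push_neg at ha hb hc
  refine ⟨a, ha.1, b, hb.1, c, hc.1, fun w hsub => ?_⟩
  have hwYc : w ∈ Yc := by
    by_contra hwn
    have : w ∈ Y := by
      rw [hY, Finset.mem_sdiff]
      exact ⟨Finset.mem_univ w, hwn⟩
    rw [Finset.card_eq_zero.mp hYcard] at this
    exact absurd this (Finset.notMem_empty w)
  rw [hYc, Finset.mem_filter] at hwYc
  have haz : a ≠ z := fun h => hz1 (h ▸ ha.1)
  have hby : b ≠ y := fun h => hy2 (h ▸ hb.1)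
  have hcx : c ≠ x := fun h => hx3 (h ▸ hc.1)
  rcases hwYc.2 with hw | hw | hw <;> have := hsub hw <;>
    rw [Finset.mem_insert, Finset.mem_insert, Finset.mem_singleton] at this
  · rcases this with rfl | rfl | rfl
    · exact ha.2.1 rfl
    · exact hb.2.1 rfl
    · exact hcx rfl
  · rcases this with rfl | rfl | rfl
    · exact ha.2.2 rfl
    · exact hby rfl
    · exact hc.2.1 rfl
  · rcases this with rfl | rfl | rfl
    · exact haz rfl
    · exact hb.2.2 rfl
    · exact hc.2.2 rfl

lemma core_lemma (L1 L2 L3 : Finset ℕ) (h1 : L1.card = 3) (h2 : L2.card = 3)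
    (h3 : L3.card = 3) (P : Fin 6 → Finset ℕ) (hP : ∀ w, (P w).card = 2) :
    ∃ a ∈ L1, ∃ b ∈ L2, ∃ c ∈ L3, ∀ w, ¬ P w ⊆ {a, b, c} := by
  classical
  by_cases hcom : ∃ t, t ∈ L1 ∧ t ∈ L2 ∧ t ∈ L3
  · obtain ⟨t, ht1, ht2, ht3⟩ := hcom
    refine ⟨t, ht1, t, ht2, t, ht3, fun w hsub => ?_⟩
    have h' : P w ⊆ {t} := by simpa using hsub
    have := Finset.card_le_card h'
    simp [hP w] at this
  push_neg at hcom
  by_cases h12b : 2 ≤ (L1 ∩ L2).card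
  · obtain ⟨x, hx, x', hx', hne⟩ := Finset.one_lt_card.mp h12b
    rw [Finset.mem_inter] at hx hx'
    exact twoShared L1 L2 L3 h1 h2 h3 P hP x x' hne hx.1 hx.2 hx'.1 hx'.2
      (hcom x hx.1 hx.2) (hcom x' hx'.1 hx'.2)
  by_cases h13b : 2 ≤ (L1 ∩ L3).card
  · obtain ⟨x, hx, x', hx', hne⟩ := Finset.one_lt_card.mp h13b
    rw [Finset.mem_inter] at hx hx'
    have hx2 : x ∉ L2 := fun h => hcom x hx.1 h hx.2
    have hx'2 : x' ∉ L2 := fun h => hcom x' hx'.1 h hx'.2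
    obtain ⟨a, ha, b, hb, c, hc, hgood⟩ :=
      twoShared L1 L3 L2 h1 h3 h2 P hP x x' hne hx.1 hx.2 hx'.1 hx'.2 hx2 hx'2
    refine ⟨a, ha, c, hc, b, hb, fun w hsub => hgood w ?_⟩
    have hset : ({a, c, b} : Finset ℕ) = {a, b, c} := by ext u; simp; tauto
    rwa [← hset]
  by_cases h23b : 2 ≤ (L2 ∩ L3).card
  · obtain ⟨x, hx, x', hx', hne⟩ := Finset.one_lt_card.mp h23b
    rw [Finset.mem_inter] at hx hx'
    have hx1 : x ∉ L1 := fun h => hcom x h hx.1 hx.2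
    have hx'1 : x' ∉ L1 := fun h => hcom x' h hx'.1 hx'.2
    obtain ⟨a, ha, b, hb, c, hc, hgood⟩ :=
      twoShared L2 L3 L1 h2 h3 h1 P hP x x' hne hx.1 hx.2 hx'.1 hx'.2 hx1 hx'1
    refine ⟨c, hc, a, ha, b, hb, fun w hsub => hgood w ?_⟩
    have hset : ({a, b, c} : Finset ℕ) = {c, a, b} := by ext u; simp; tauto
    rwa [hset]
  push_neg at h12b h13b h23b
  have conv : ∀ s : Finset ℕ, s.card < 2 → s = ∅ ∨ ∃ x, s = {x} := by
    intro s hs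
    rcases s.eq_empty_or_nonempty with h | h
    · exact Or.inl h
    · right; exact Finset.card_eq_one.mp (le_antisymm (by omega) h.card_pos)
  rcases conv _ h12b with e12 | ⟨x, e12⟩ <;> rcases conv _ h13b with e13 | ⟨y, e13⟩ <;>
    rcases conv _ h23b with e23 | ⟨z, e23⟩
  -- (∅, ∅, ∅)
  · refine count_lemma L1 L2 L3 (by omega) (by omega) (by omega)
      (Finset.disjoint_iff_inter_eq_empty.mpr e12)
      (Finset.disjoint_iff_inter_eq_empty.mpr e13)
      (Finset.disjoint_iff_inter_eq_empty.mpr e23)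
      Finset.univ P hP (by rw [h1, h2, h3]; simp) |>.imp ?_
    intro a
    exact fun ⟨ha, h'⟩ => ⟨ha, h'.imp fun b ⟨hb, h''⟩ =>
      ⟨hb, h''.imp fun c ⟨hc, hg⟩ => ⟨hc, fun w => hg w (Finset.mem_univ w)⟩⟩⟩
  -- (∅, ∅, {z})
  · have hz1 : z ∉ L1 := by
      have hzI : z ∈ L2 ∩ L3 := by rw [e23]; simp
      rw [Finset.mem_inter] at hzI
      exact fun h => hcom z h hzI.1 hzI.2
    obtain ⟨a, ha, b, hb, c, hc, hgood⟩ :=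
      k1_lemma L2 L3 L1 h2 h3 h1 P hP z e23 (by rwa [Finset.inter_comm])
        (by rwa [Finset.inter_comm]) hz1
    refine ⟨c, hc, a, ha, b, hb, fun w hsub => hgood w ?_⟩
    have hset : ({a, b, c} : Finset ℕ) = {c, a, b} := by ext u; simp; tauto
    rwa [hset]
  -- (∅, {y}, ∅)
  · have hy2 : y ∉ L2 := by
      have hyI : y ∈ L1 ∩ L3 := by rw [e13]; simp
      rw [Finset.mem_inter] at hyI
      exact fun h => hcom y hyI.1 h hyI.2
    obtain ⟨a, ha, b, hb, c, hc, hgood⟩ :=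
      k1_lemma L1 L3 L2 h1 h3 h2 P hP y e13 e12 (by rwa [Finset.inter_comm]) hy2
    refine ⟨a, ha, c, hc, b, hb, fun w hsub => hgood w ?_⟩
    have hset : ({a, c, b} : Finset ℕ) = {a, b, c} := by ext u; simp; tauto
    rwa [← hset]
  -- (∅, {y}, {z})
  · have hy2 : y ∉ L2 := by
      have hyI : y ∈ L1 ∩ L3 := by rw [e13]; simp
      rw [Finset.mem_inter] at hyI
      exact fun h => hcom y hyI.1 h hyI.2
    have hz1 : z ∉ L1 := by
      have hzI : z ∈ L2 ∩ L3 := by rw [e23]; simp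
      rw [Finset.mem_inter] at hzI
      exact fun h => hcom z h hzI.1 hzI.2
    obtain ⟨a, ha, b, hb, c, hc, hgood⟩ :=
      k2_lemma L3 L1 L2 h3 h1 h2 P hP y z (by rwa [Finset.inter_comm])
        (by rwa [Finset.inter_comm]) e12 hy2 hz1
    refine ⟨b, hb, c, hc, a, ha, fun w hsub => hgood w ?_⟩
    have hset : ({a, b, c} : Finset ℕ) = {b, c, a} := by ext u; simp; tauto
    rwa [hset]
  -- ({x}, ∅, ∅)
  · have hx3 : x ∉ L3 := by
      have hxI : x ∈ L1 ∩ L2 := by rw [e12]; simp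
      rw [Finset.mem_inter] at hxI
      exact hcom x hxI.1 hxI.2
    exact k1_lemma L1 L2 L3 h1 h2 h3 P hP x e12 e13 e23 hx3
  -- ({x}, ∅, {z})
  · have hx3 : x ∉ L3 := by
      have hxI : x ∈ L1 ∩ L2 := by rw [e12]; simp
      rw [Finset.mem_inter] at hxI
      exact hcom x hxI.1 hxI.2
    have hz1 : z ∉ L1 := by
      have hzI : z ∈ L2 ∩ L3 := by rw [e23]; simp
      rw [Finset.mem_inter] at hzI
      exact fun h => hcom z h hzI.1 hzI.2
    obtain ⟨a, ha, b, hb, c, hc, hgood⟩ :=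
      k2_lemma L2 L1 L3 h2 h1 h3 P hP x z (by rwa [Finset.inter_comm]) e23
        e13 hx3 hz1
    refine ⟨b, hb, a, ha, c, hc, fun w hsub => hgood w ?_⟩
    have hset : ({a, b, c} : Finset ℕ) = {b, a, c} := by ext u; simp; tauto
    rwa [hset]
  -- ({x}, {y}, ∅)
  · have hx3 : x ∉ L3 := by
      have hxI : x ∈ L1 ∩ L2 := by rw [e12]; simp
      rw [Finset.mem_inter] at hxI
      exact hcom x hxI.1 hxI.2
    have hy2 : y ∉ L2 := by
      have hyI : y ∈ L1 ∩ L3 := by rw [e13]; simp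
      rw [Finset.mem_inter] at hyI
      exact fun h => hcom y hyI.1 h hyI.2
    exact k2_lemma L1 L2 L3 h1 h2 h3 P hP x y e12 e13 e23 hx3 hy2
  -- ({x}, {y}, {z})
  · have hx3 : x ∉ L3 := by
      have hxI : x ∈ L1 ∩ L2 := by rw [e12]; simp
      rw [Finset.mem_inter] at hxI
      exact hcom x hxI.1 hxI.2
    have hy2 : y ∉ L2 := by
      have hyI : y ∈ L1 ∩ L3 := by rw [e13]; simp
      rw [Finset.mem_inter] at hyI
      exact fun h => hcom y hyI.1 h hyI.2
    have hz1 : z ∉ L1 := by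
      have hzI : z ∈ L2 ∩ L3 := by rw [e23]; simp
      rw [Finset.mem_inter] at hzI
      exact fun h => hcom z h hzI.1 hzI.2
    exact k3_lemma L1 L2 L3 h1 h2 h3 P hP x y z e12 e13 e23 hx3 hy2 hz1


theorem stmt_6 (L : Fin 3 ⊕ Fin 6 → Finset ℕ)
    (hx : ∀ x : Fin 3, (L (Sum.inl x)).card = 3)
    (hy : ∀ y : Fin 6, (L (Sum.inr y)).card = 2) :
    ∃ f, properListColoring (completeBipartiteGraph (Fin 3) (Fin 6)) L f := by
  classical
  obtain ⟨c1, hc1, c2, hc2, c3, hc3, hgood⟩ :=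
    core_lemma (L (Sum.inl 0)) (L (Sum.inl 1)) (L (Sum.inl 2))
      (hx 0) (hx 1) (hx 2) (fun y => L (Sum.inr y)) hy
  have hch : ∀ y : Fin 6, ∃ d, d ∈ L (Sum.inr y) ∧ d ∉ ({c1, c2, c3} : Finset ℕ) := by
    intro y
    have := hgood y
    rw [Finset.not_subset] at this
    obtain ⟨d, hd, hnd⟩ := this
    exact ⟨d, hd, hnd⟩
  choose g hg1 hg2 using hch
  refine ⟨Sum.elim (fun x => ![c1, c2, c3] x) g, ?_, ?_⟩
  · intro v
    rcases v with x | y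
    · fin_cases x <;> simpa
    · exact hg1 y
  · intro u v hadj
    match u, v with
    | Sum.inl xu, Sum.inl xv => simp [completeBipartiteGraph] at hadj
    | Sum.inr yu, Sum.inr yv => simp [completeBipartiteGraph] at hadj
    | Sum.inl xu, Sum.inr yv =>
      intro heq
      apply hg2 yv
      have hgv : g yv = ![c1, c2, c3] xu := by simpa using heq.symm
      rw [hgv]
      fin_cases xu <;> simp
    | Sum.inr yu, Sum.inl xv =>
      intro heq
      apply hg2 yu
      have hgv : g yu = ![c1, c2, c3] xv := by simpa using heq
      rw [hgv]
      fin_cases xv <;> simp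
end

section
/- The complete bipartite graph K_{4,5} is (2,3)-choosable: with bipartition X = {x_1,...,x_4}, Y = {y_1,...,y_5}, for every list assignment L with |L(x)| = 2 for x ∈ X and |L(y)| = 3 for y ∈ Y, K_{4,5} has a proper L-coloring. -/
open Finset

/-- Six choices from the four lists whose images pairwise intersect in at most 2 colors. -/
def SixChoices (e : Fin 4 → Finset ℕ) : Prop :=
  ∃ cs : Fin 6 → Fin 4 → ℕ, (∀ p i, cs p i ∈ e i) ∧
    ∀ p q, p ≠ q →
      ((Finset.univ.image (cs p)) ∩ (Finset.univ.image (cs q))).card ≤ 2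

lemma sixChoices_comp (e : Fin 4 → Finset ℕ) (v : Fin 4 → Fin 4)
    (hv : Function.Surjective v) (h : SixChoices (e ∘ v)) : SixChoices e := by
  obtain ⟨cs, hmem, hcard⟩ := h
  choose g hg using hv
  refine ⟨fun p i => cs p (g i), fun p i => ?_, fun p q hpq => ?_⟩
  · have := hmem p (g i)
    simpa [Function.comp, hg] using this
  · have hsub : ∀ p, (Finset.univ.image fun i => cs p (g i)) ⊆ Finset.univ.image (cs p) := by
      intro p
      refine Finset.image_subset_iff.2 fun i _ => Finset.mem_image_of_mem _ (Finset.mem_univ _)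
    exact le_trans (Finset.card_le_card (Finset.inter_subset_inter (hsub p) (hsub q)))
      (hcard p q hpq)

lemma sixChoices_of_template {k : ℕ} (e : Fin 4 → Finset ℕ)
    (E : Fin 4 → Finset (Fin k)) (cs : Fin 6 → Fin 4 → Fin k) (φ : Fin k → ℕ)
    (hφ : Function.Injective φ) (hE : ∀ i, e i = (E i).image φ)
    (h1 : ∀ p i, cs p i ∈ E i)
    (h2 : ∀ p q, p ≠ q →
      ((Finset.univ.image (cs p)) ∩ (Finset.univ.image (cs q))).card ≤ 2) :
    SixChoices e := by
  refine ⟨fun p i => φ (cs p i), fun p i => ?_, fun p q hpq => ?_⟩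
  · rw [hE]; exact Finset.mem_image_of_mem φ (h1 p i)
  · have himg : ∀ p, (Finset.univ.image fun i => φ (cs p i))
        = (Finset.univ.image (cs p)).image φ := by
      intro p; rw [show (fun i => φ (cs p i)) = φ ∘ cs p from rfl, ← Finset.image_image]
    rw [himg, himg, ← Finset.image_inter _ _ hφ, Finset.card_image_of_injective _ hφ]
    exact h2 p q hpq

lemma ne_of_disj {s t : Finset ℕ} (h : s ∩ t = ∅) {x y : ℕ} (hx : x ∈ s) (hy : y ∈ t) :
    x ≠ y := by
  rintro rfl
  exact (Finset.eq_empty_iff_forall_notMem.mp h x) (Finset.mem_inter.mpr ⟨hx, hy⟩)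

lemma eq_pair {s : Finset ℕ} {x y : ℕ} (h2 : s.card = 2) (hx : x ∈ s) (hy : y ∈ s)
    (hxy : x ≠ y) : s = {x, y} := by
  have hsub : ({x, y} : Finset ℕ) ⊆ s := by
    intro z hz; rcases Finset.mem_insert.mp hz with rfl | hz
    · exact hx
    · rwa [Finset.mem_singleton.mp hz]
  exact (Finset.eq_of_subset_of_card_le hsub (by rw [h2, Finset.card_pair hxy])).symm

lemma other_elt {s : Finset ℕ} {v : ℕ} (h2 : s.card = 2) (hv : v ∈ s) :
    ∃ p, p ≠ v ∧ s = {v, p} := by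
  obtain ⟨a, b, hab, rfl⟩ := Finset.card_eq_two.mp h2
  rcases Finset.mem_insert.mp hv with rfl | hv
  · exact ⟨b, fun h => hab h.symm, rfl⟩
  · rw [Finset.mem_singleton.mp hv]
    exact ⟨a, fun h => hab h, Finset.pair_comm a b⟩
lemma six_digon (A C D : Finset ℕ) (hA : A.card = 2) (hC : C.card = 2) (hD : D.card = 2)
    (hAC : A ∩ C = ∅) (hAD : A ∩ D = ∅) (hCD : C ∩ D = ∅) :
    SixChoices ![A, A, C, D] := by
  obtain ⟨a, b, hab, rfl⟩ := Finset.card_eq_two.mp hA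
  obtain ⟨c, d, hcd, rfl⟩ := Finset.card_eq_two.mp hC
  obtain ⟨x, y, hxy, rfl⟩ := Finset.card_eq_two.mp hD
  have h1 : a ≠ c := ne_of_disj hAC (by simp) (by simp)
  have h2 : a ≠ d := ne_of_disj hAC (by simp) (by simp)
  have h3 : b ≠ c := ne_of_disj hAC (by simp) (by simp)
  have h4 : b ≠ d := ne_of_disj hAC (by simp) (by simp)
  have h5 : a ≠ x := ne_of_disj hAD (by simp) (by simp)
  have h6 : a ≠ y := ne_of_disj hAD (by simp) (by simp)
  have h7 : b ≠ x := ne_of_disj hAD (by simp) (by simp)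
  have h8 : b ≠ y := ne_of_disj hAD (by simp) (by simp)
  have h9 : c ≠ x := ne_of_disj hCD (by simp) (by simp)
  have h10 : c ≠ y := ne_of_disj hCD (by simp) (by simp)
  have h11 : d ≠ x := ne_of_disj hCD (by simp) (by simp)
  have h12 : d ≠ y := ne_of_disj hCD (by simp) (by simp)
  apply sixChoices_of_template _ ![{0,1},{0,1},{2,3},{4,5}]
    ![![0,0,2,4],![0,0,2,5],![0,0,3,4],![1,1,2,4],![1,1,2,5],![1,1,3,4]]
    ![a,b,c,d,x,y] ?_ ?_ (by decide) (by decide)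
  · have e0 : (![a,b,c,d,x,y] : Fin 6 → ℕ) 0 = a := rfl
    have e1 : (![a,b,c,d,x,y] : Fin 6 → ℕ) 1 = b := rfl
    have e2 : (![a,b,c,d,x,y] : Fin 6 → ℕ) 2 = c := rfl
    have e3 : (![a,b,c,d,x,y] : Fin 6 → ℕ) 3 = d := rfl
    have e4 : (![a,b,c,d,x,y] : Fin 6 → ℕ) 4 = x := rfl
    have e5 : (![a,b,c,d,x,y] : Fin 6 → ℕ) 5 = y := rfl
    intro i j hij
    fin_cases i <;> fin_cases j <;>
      simp only [Fin.isValue, e0, e1, e2, e3, e4, e5] at hij <;>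
      first
        | rfl
        | (exact absurd hij (by assumption))
        | (exact absurd hij.symm (by assumption))
  · intro i
    fin_cases i <;>
      simp [Finset.image_insert,
        show (![a,b,c,d,x,y] : Fin 6 → ℕ) 0 = a from rfl,
        show (![a,b,c,d,x,y] : Fin 6 → ℕ) 1 = b from rfl,
        show (![a,b,c,d,x,y] : Fin 6 → ℕ) 2 = c from rfl,
        show (![a,b,c,d,x,y] : Fin 6 → ℕ) 3 = d from rfl,
        show (![a,b,c,d,x,y] : Fin 6 → ℕ) 4 = x from rfl,
        show (![a,b,c,d,x,y] : Fin 6 → ℕ) 5 = y from rfl]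


lemma six_match (A B C D : Finset ℕ) (hA : A.card = 2) (hB : B.card = 2)
    (hC : C.card = 2) (hD : D.card = 2)
    (hAB : A ∩ B = ∅) (hAC : A ∩ C = ∅) (hAD : A ∩ D = ∅)
    (hBC : B ∩ C = ∅) (hBD : B ∩ D = ∅) (hCD : C ∩ D = ∅) :
    SixChoices ![A, B, C, D] := by
  obtain ⟨a1, a2, ha, rfl⟩ := Finset.card_eq_two.mp hA
  obtain ⟨b1, b2, hb, rfl⟩ := Finset.card_eq_two.mp hB
  obtain ⟨c1, c2, hc, rfl⟩ := Finset.card_eq_two.mp hC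
  obtain ⟨d1, d2, hd, rfl⟩ := Finset.card_eq_two.mp hD
  have f1 : a1 ≠ b1 := ne_of_disj hAB (by simp) (by simp)
  have f2 : a1 ≠ b2 := ne_of_disj hAB (by simp) (by simp)
  have f3 : a2 ≠ b1 := ne_of_disj hAB (by simp) (by simp)
  have f4 : a2 ≠ b2 := ne_of_disj hAB (by simp) (by simp)
  have f5 : a1 ≠ c1 := ne_of_disj hAC (by simp) (by simp)
  have f6 : a1 ≠ c2 := ne_of_disj hAC (by simp) (by simp)
  have f7 : a2 ≠ c1 := ne_of_disj hAC (by simp) (by simp)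
  have f8 : a2 ≠ c2 := ne_of_disj hAC (by simp) (by simp)
  have f9 : a1 ≠ d1 := ne_of_disj hAD (by simp) (by simp)
  have f10 : a1 ≠ d2 := ne_of_disj hAD (by simp) (by simp)
  have f11 : a2 ≠ d1 := ne_of_disj hAD (by simp) (by simp)
  have f12 : a2 ≠ d2 := ne_of_disj hAD (by simp) (by simp)
  have f13 : b1 ≠ c1 := ne_of_disj hBC (by simp) (by simp)
  have f14 : b1 ≠ c2 := ne_of_disj hBC (by simp) (by simp)
  have f15 : b2 ≠ c1 := ne_of_disj hBC (by simp) (by simp)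
  have f16 : b2 ≠ c2 := ne_of_disj hBC (by simp) (by simp)
  have f17 : b1 ≠ d1 := ne_of_disj hBD (by simp) (by simp)
  have f18 : b1 ≠ d2 := ne_of_disj hBD (by simp) (by simp)
  have f19 : b2 ≠ d1 := ne_of_disj hBD (by simp) (by simp)
  have f20 : b2 ≠ d2 := ne_of_disj hBD (by simp) (by simp)
  have f21 : c1 ≠ d1 := ne_of_disj hCD (by simp) (by simp)
  have f22 : c1 ≠ d2 := ne_of_disj hCD (by simp) (by simp)
  have f23 : c2 ≠ d1 := ne_of_disj hCD (by simp) (by simp)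
  have f24 : c2 ≠ d2 := ne_of_disj hCD (by simp) (by simp)
  apply sixChoices_of_template _ ![{0,1},{2,3},{4,5},{6,7}]
    ![![0,2,4,6],![0,2,5,7],![0,3,4,7],![0,3,5,6],![1,2,4,7],![1,2,5,6]]
    ![a1,a2,b1,b2,c1,c2,d1,d2] ?_ ?_ (by decide) (by decide)
  · have e0 : (![a1,a2,b1,b2,c1,c2,d1,d2] : Fin 8 → ℕ) 0 = a1 := rfl
    have e1 : (![a1,a2,b1,b2,c1,c2,d1,d2] : Fin 8 → ℕ) 1 = a2 := rfl
    have e2 : (![a1,a2,b1,b2,c1,c2,d1,d2] : Fin 8 → ℕ) 2 = b1 := rfl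
    have e3 : (![a1,a2,b1,b2,c1,c2,d1,d2] : Fin 8 → ℕ) 3 = b2 := rfl
    have e4 : (![a1,a2,b1,b2,c1,c2,d1,d2] : Fin 8 → ℕ) 4 = c1 := rfl
    have e5 : (![a1,a2,b1,b2,c1,c2,d1,d2] : Fin 8 → ℕ) 5 = c2 := rfl
    have e6 : (![a1,a2,b1,b2,c1,c2,d1,d2] : Fin 8 → ℕ) 6 = d1 := rfl
    have e7 : (![a1,a2,b1,b2,c1,c2,d1,d2] : Fin 8 → ℕ) 7 = d2 := rfl
    intro i j hij
    fin_cases i <;> fin_cases j <;>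
      simp only [Fin.isValue, e0, e1, e2, e3, e4, e5, e6, e7] at hij <;>
      first
        | rfl
        | (exact absurd hij (by assumption))
        | (exact absurd hij.symm (by assumption))
  · intro i
    fin_cases i <;>
      simp [Finset.image_insert,
        show (![a1,a2,b1,b2,c1,c2,d1,d2] : Fin 8 → ℕ) 0 = a1 from rfl,
        show (![a1,a2,b1,b2,c1,c2,d1,d2] : Fin 8 → ℕ) 1 = a2 from rfl,
        show (![a1,a2,b1,b2,c1,c2,d1,d2] : Fin 8 → ℕ) 2 = b1 from rfl,
        show (![a1,a2,b1,b2,c1,c2,d1,d2] : Fin 8 → ℕ) 3 = b2 from rfl,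
        show (![a1,a2,b1,b2,c1,c2,d1,d2] : Fin 8 → ℕ) 4 = c1 from rfl,
        show (![a1,a2,b1,b2,c1,c2,d1,d2] : Fin 8 → ℕ) 5 = c2 from rfl,
        show (![a1,a2,b1,b2,c1,c2,d1,d2] : Fin 8 → ℕ) 6 = d1 from rfl,
        show (![a1,a2,b1,b2,c1,c2,d1,d2] : Fin 8 → ℕ) 7 = d2 from rfl]

lemma six_single (A B C D : Finset ℕ) (hA : A.card = 2) (hB : B.card = 2)
    (hC : C.card = 2) (hD : D.card = 2)
    (hABne : (A ∩ B).Nonempty) (hABeq : A ≠ B)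
    (hAC : A ∩ C = ∅) (hAD : A ∩ D = ∅) (hBC : B ∩ C = ∅) (hBD : B ∩ D = ∅)
    (hCD : C ∩ D = ∅) :
    SixChoices ![A, B, C, D] := by
  obtain ⟨v, hv⟩ := hABne
  rw [Finset.mem_inter] at hv
  obtain ⟨hvA, hvB⟩ := hv
  obtain ⟨p, hpv, hApair⟩ := other_elt hA hvA
  obtain ⟨q, hqv, hBpair⟩ := other_elt hB hvB
  obtain ⟨c1, c2, hc, rfl⟩ := Finset.card_eq_two.mp hC
  obtain ⟨d1, d2, hd, rfl⟩ := Finset.card_eq_two.mp hD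
  have hpA : p ∈ A := by rw [hApair]; simp
  have hqB : q ∈ B := by rw [hBpair]; simp
  have hpq : p ≠ q := by
    rintro rfl; exact hABeq (by rw [hApair, hBpair])
  have g1 : v ≠ c1 := ne_of_disj hAC hvA (by simp)
  have g2 : v ≠ c2 := ne_of_disj hAC hvA (by simp)
  have g3 : p ≠ c1 := ne_of_disj hAC hpA (by simp)
  have g4 : p ≠ c2 := ne_of_disj hAC hpA (by simp)
  have g5 : q ≠ c1 := ne_of_disj hBC hqB (by simp)
  have g6 : q ≠ c2 := ne_of_disj hBC hqB (by simp)
  have g7 : v ≠ d1 := ne_of_disj hAD hvA (by simp)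
  have g8 : v ≠ d2 := ne_of_disj hAD hvA (by simp)
  have g9 : p ≠ d1 := ne_of_disj hAD hpA (by simp)
  have g10 : p ≠ d2 := ne_of_disj hAD hpA (by simp)
  have g11 : q ≠ d1 := ne_of_disj hBD hqB (by simp)
  have g12 : q ≠ d2 := ne_of_disj hBD hqB (by simp)
  have g13 : c1 ≠ d1 := ne_of_disj hCD (by simp) (by simp)
  have g14 : c1 ≠ d2 := ne_of_disj hCD (by simp) (by simp)
  have g15 : c2 ≠ d1 := ne_of_disj hCD (by simp) (by simp)
  have g16 : c2 ≠ d2 := ne_of_disj hCD (by simp) (by simp)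
  apply sixChoices_of_template _ ![{1,0},{1,2},{3,4},{5,6}]
    ![![1,1,3,5],![1,1,3,6],![1,1,4,5],![1,1,4,6],![0,2,3,5],![0,2,4,6]]
    ![p,v,q,c1,c2,d1,d2] ?_ ?_ (by decide) (by decide)
  · have e0 : (![p,v,q,c1,c2,d1,d2] : Fin 7 → ℕ) 0 = p := rfl
    have e1 : (![p,v,q,c1,c2,d1,d2] : Fin 7 → ℕ) 1 = v := rfl
    have e2 : (![p,v,q,c1,c2,d1,d2] : Fin 7 → ℕ) 2 = q := rfl
    have e3 : (![p,v,q,c1,c2,d1,d2] : Fin 7 → ℕ) 3 = c1 := rfl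
    have e4 : (![p,v,q,c1,c2,d1,d2] : Fin 7 → ℕ) 4 = c2 := rfl
    have e5 : (![p,v,q,c1,c2,d1,d2] : Fin 7 → ℕ) 5 = d1 := rfl
    have e6 : (![p,v,q,c1,c2,d1,d2] : Fin 7 → ℕ) 6 = d2 := rfl
    intro i j hij
    fin_cases i <;> fin_cases j <;>
      simp only [Fin.isValue, e0, e1, e2, e3, e4, e5, e6] at hij <;>
      first
        | rfl
        | (exact absurd hij (by assumption))
        | (exact absurd hij.symm (by assumption))
  · intro i
    fin_cases i <;>
      simp [hApair, hBpair, Finset.image_insert,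
        show (![p,v,q,c1,c2,d1,d2] : Fin 7 → ℕ) 0 = p from rfl,
        show (![p,v,q,c1,c2,d1,d2] : Fin 7 → ℕ) 1 = v from rfl,
        show (![p,v,q,c1,c2,d1,d2] : Fin 7 → ℕ) 2 = q from rfl,
        show (![p,v,q,c1,c2,d1,d2] : Fin 7 → ℕ) 3 = c1 from rfl,
        show (![p,v,q,c1,c2,d1,d2] : Fin 7 → ℕ) 4 = c2 from rfl,
        show (![p,v,q,c1,c2,d1,d2] : Fin 7 → ℕ) 5 = d1 from rfl,
        show (![p,v,q,c1,c2,d1,d2] : Fin 7 → ℕ) 6 = d2 from rfl]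

lemma six_path (A B C D : Finset ℕ) (hA : A.card = 2) (hB : B.card = 2)
    (hC : C.card = 2) (hD : D.card = 2)
    (hABne : (A ∩ B).Nonempty) (hBCne : (B ∩ C).Nonempty)
    (hAC : A ∩ C = ∅) (hAD : A ∩ D = ∅) (hBD : B ∩ D = ∅) (hCD : C ∩ D = ∅) :
    SixChoices ![A, B, C, D] := by
  obtain ⟨v, hv⟩ := hABne
  rw [Finset.mem_inter] at hv
  obtain ⟨hvA, hvB⟩ := hv
  obtain ⟨w, hw⟩ := hBCne
  rw [Finset.mem_inter] at hw
  obtain ⟨hwB, hwC⟩ := hw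
  have hvw : v ≠ w := ne_of_disj hAC hvA hwC
  have hBpair : B = {v, w} := eq_pair hB hvB hwB hvw
  obtain ⟨p, hpv, hApair⟩ := other_elt hA hvA
  obtain ⟨q, hqw, hCpair⟩ := other_elt hC hwC
  obtain ⟨x, y, hxy, rfl⟩ := Finset.card_eq_two.mp hD
  have hpA : p ∈ A := by rw [hApair]; simp
  have hqC : q ∈ C := by rw [hCpair]; simp
  have g1 : p ≠ w := ne_of_disj hAC hpA hwC
  have g2 : p ≠ q := ne_of_disj hAC hpA hqC
  have g3 : v ≠ q := ne_of_disj hAC hvA hqC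
  have g4 : p ≠ x := ne_of_disj hAD hpA (by simp)
  have g5 : p ≠ y := ne_of_disj hAD hpA (by simp)
  have g6 : v ≠ x := ne_of_disj hAD hvA (by simp)
  have g7 : v ≠ y := ne_of_disj hAD hvA (by simp)
  have g8 : w ≠ x := ne_of_disj hBD hwB (by simp)
  have g9 : w ≠ y := ne_of_disj hBD hwB (by simp)
  have g10 : q ≠ x := ne_of_disj hCD hqC (by simp)
  have g11 : q ≠ y := ne_of_disj hCD hqC (by simp)
  apply sixChoices_of_template _ ![{1,0},{1,2},{2,3},{4,5}]
    ![![1,1,2,4],![1,1,2,5],![1,1,3,4],![1,1,3,5],![0,2,2,4],![0,2,2,5]]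
    ![p,v,w,q,x,y] ?_ ?_ (by decide) (by decide)
  · have e0 : (![p,v,w,q,x,y] : Fin 6 → ℕ) 0 = p := rfl
    have e1 : (![p,v,w,q,x,y] : Fin 6 → ℕ) 1 = v := rfl
    have e2 : (![p,v,w,q,x,y] : Fin 6 → ℕ) 2 = w := rfl
    have e3 : (![p,v,w,q,x,y] : Fin 6 → ℕ) 3 = q := rfl
    have e4 : (![p,v,w,q,x,y] : Fin 6 → ℕ) 4 = x := rfl
    have e5 : (![p,v,w,q,x,y] : Fin 6 → ℕ) 5 = y := rfl
    intro i j hij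
    fin_cases i <;> fin_cases j <;>
      simp only [Fin.isValue, e0, e1, e2, e3, e4, e5] at hij <;>
      first
        | rfl
        | (exact absurd hij (by assumption))
        | (exact absurd hij.symm (by assumption))
  · intro i
    fin_cases i <;>
      simp [hApair, hBpair, hCpair, Finset.image_insert,
        show (![p,v,w,q,x,y] : Fin 6 → ℕ) 0 = p from rfl,
        show (![p,v,w,q,x,y] : Fin 6 → ℕ) 1 = v from rfl,
        show (![p,v,w,q,x,y] : Fin 6 → ℕ) 2 = w from rfl,
        show (![p,v,w,q,x,y] : Fin 6 → ℕ) 3 = q from rfl,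
        show (![p,v,w,q,x,y] : Fin 6 → ℕ) 4 = x from rfl,
        show (![p,v,w,q,x,y] : Fin 6 → ℕ) 5 = y from rfl]

lemma six_tri (A B C D : Finset ℕ) (hA : A.card = 2) (hB : B.card = 2)
    (hC : C.card = 2) (hD : D.card = 2)
    (hABne : (A ∩ B).Nonempty) (hACne : (A ∩ C).Nonempty) (hBCne : (B ∩ C).Nonempty)
    (hAD : A ∩ D = ∅) (hBD : B ∩ D = ∅) (hCD : C ∩ D = ∅)
    (hntri : ∀ z, z ∈ A → z ∈ B → z ∈ C → False) :
    SixChoices ![A, B, C, D] := by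
  obtain ⟨v, hv⟩ := hABne
  rw [Finset.mem_inter] at hv
  obtain ⟨hvA, hvB⟩ := hv
  obtain ⟨w, hw⟩ := hACne
  rw [Finset.mem_inter] at hw
  obtain ⟨hwA, hwC⟩ := hw
  obtain ⟨u, hu⟩ := hBCne
  rw [Finset.mem_inter] at hu
  obtain ⟨huB, huC⟩ := hu
  have hvw : v ≠ w := by rintro rfl; exact hntri v hvA hvB hwC
  have hvu : v ≠ u := by rintro rfl; exact hntri v hvA hvB huC
  have hwu : w ≠ u := by rintro rfl; exact hntri w hwA huB hwC
  have hApair : A = {v, w} := eq_pair hA hvA hwA hvw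
  have hBpair : B = {v, u} := eq_pair hB hvB huB hvu
  have hCpair : C = {w, u} := eq_pair hC hwC huC hwu
  obtain ⟨x, y, hxy, rfl⟩ := Finset.card_eq_two.mp hD
  have g1 : v ≠ x := ne_of_disj hAD hvA (by simp)
  have g2 : v ≠ y := ne_of_disj hAD hvA (by simp)
  have g3 : w ≠ x := ne_of_disj hAD hwA (by simp)
  have g4 : w ≠ y := ne_of_disj hAD hwA (by simp)
  have g5 : u ≠ x := ne_of_disj hBD huB (by simp)
  have g6 : u ≠ y := ne_of_disj hBD huB (by simp)
  apply sixChoices_of_template _ ![{0,1},{0,2},{1,2},{3,4}]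
    ![![0,0,1,3],![0,0,1,4],![0,2,2,3],![0,2,2,4],![1,2,2,3],![1,2,2,4]]
    ![v,w,u,x,y] ?_ ?_ (by decide) (by decide)
  · have e0 : (![v,w,u,x,y] : Fin 5 → ℕ) 0 = v := rfl
    have e1 : (![v,w,u,x,y] : Fin 5 → ℕ) 1 = w := rfl
    have e2 : (![v,w,u,x,y] : Fin 5 → ℕ) 2 = u := rfl
    have e3 : (![v,w,u,x,y] : Fin 5 → ℕ) 3 = x := rfl
    have e4 : (![v,w,u,x,y] : Fin 5 → ℕ) 4 = y := rfl
    intro i j hij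
    fin_cases i <;> fin_cases j <;>
      simp only [Fin.isValue, e0, e1, e2, e3, e4] at hij <;>
      first
        | rfl
        | (exact absurd hij (by assumption))
        | (exact absurd hij.symm (by assumption))
  · intro i
    fin_cases i <;>
      simp [hApair, hBpair, hCpair, Finset.image_insert,
        show (![v,w,u,x,y] : Fin 5 → ℕ) 0 = v from rfl,
        show (![v,w,u,x,y] : Fin 5 → ℕ) 1 = w from rfl,
        show (![v,w,u,x,y] : Fin 5 → ℕ) 2 = u from rfl,
        show (![v,w,u,x,y] : Fin 5 → ℕ) 3 = x from rfl,
        show (![v,w,u,x,y] : Fin 5 → ℕ) 4 = y from rfl]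
lemma vec_comp (A B C D : Finset ℕ) (v : Fin 4 → Fin 4) :
    (![A, B, C, D] ∘ v) = ![![A,B,C,D] (v 0), ![A,B,C,D] (v 1), ![A,B,C,D] (v 2), ![A,B,C,D] (v 3)] := by
  funext i; fin_cases i <;> rfl

lemma not_nonempty {s : Finset ℕ} (h : ¬ s.Nonempty) : s = ∅ :=
  Finset.not_nonempty_iff_eq_empty.mp h

lemma caseB (A B C D : Finset ℕ) (hA : A.card = 2) (hB : B.card = 2)
    (hC : C.card = 2) (hD : D.card = 2)
    (hncov : ∀ x y : ℕ, (x ∉ A ∧ y ∉ A) ∨ (x ∉ B ∧ y ∉ B) ∨ (x ∉ C ∧ y ∉ C) ∨ (x ∉ D ∧ y ∉ D))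
    (hAB : (A ∩ B).Nonempty) : SixChoices ![A, B, C, D] := by
  obtain ⟨v, hv⟩ := hAB
  rw [Finset.mem_inter] at hv
  obtain ⟨hvA, hvB⟩ := hv
  obtain ⟨cc, hcc⟩ := Finset.card_pos.mp (by rw [hC]; norm_num)
  obtain ⟨dd, hdd⟩ := Finset.card_pos.mp (by rw [hD]; norm_num)
  have hCD : C ∩ D = ∅ := by
    rw [Finset.eq_empty_iff_forall_notMem]
    intro z hz
    rw [Finset.mem_inter] at hz
    rcases hncov v z with h | h | h | h <;> tauto
  by_cases hABeq : A = B
  · -- the "digon" case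
    have hAC : A ∩ C = ∅ := by
      rw [Finset.eq_empty_iff_forall_notMem]
      intro z hz
      rw [Finset.mem_inter] at hz
      rcases hncov z dd with h | h | h | h <;> simp_all [hABeq]
    have hAD : A ∩ D = ∅ := by
      rw [Finset.eq_empty_iff_forall_notMem]
      intro z hz
      rw [Finset.mem_inter] at hz
      rcases hncov z cc with h | h | h | h <;> simp_all [hABeq]
    subst hABeq
    exact six_digon A C D hA hC hD hAC hAD hCD
  · obtain ⟨p, hpv, hApair⟩ := other_elt hA hvA
    obtain ⟨q, hqv, hBpair⟩ := other_elt hB hvB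
    have hmemA : ∀ z, z ∈ A → z = v ∨ z = p := by
      intro z hz; rw [hApair] at hz; simpa using hz
    have hmemB : ∀ z, z ∈ B → z = v ∨ z = q := by
      intro z hz; rw [hBpair] at hz; simpa using hz
    by_cases hAC : (A ∩ C).Nonempty
    · have hBD : B ∩ D = ∅ := by
        rw [Finset.eq_empty_iff_forall_notMem]
        intro z hz
        rw [Finset.mem_inter] at hz
        obtain ⟨wc, hwc⟩ := hAC
        rw [Finset.mem_inter] at hwc
        rcases hncov wc z with h | h | h | h <;> tauto
      have hAD : A ∩ D = ∅ := by
        rw [Finset.eq_empty_iff_forall_notMem]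
        intro z hz
        rw [Finset.mem_inter] at hz
        obtain ⟨hzA, hzD⟩ := hz
        obtain ⟨wc, hwc⟩ := hAC
        rw [Finset.mem_inter] at hwc
        obtain ⟨hwcA, hwcC⟩ := hwc
        have hw' := hmemA wc hwcA
        have hz' := hmemA z hzA
        rcases hncov v p with ⟨h1, _⟩ | ⟨h1, _⟩ | ⟨h1, h2⟩ | ⟨h1, h2⟩
        · exact h1 hvA
        · exact h1 hvB
        · rcases hw' with rfl | rfl
          · exact h1 hwcC
          · exact h2 hwcC
        · rcases hz' with rfl | rfl
          · exact h1 hzD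
          · exact h2 hzD
      by_cases hBC : (B ∩ C).Nonempty
      · -- triangle A B C, D isolated
        refine six_tri A B C D hA hB hC hD ⟨v, by simp [hvA, hvB]⟩ hAC hBC hAD hBD hCD ?_
        intro z hzA hzB hzC
        rcases hncov z dd with h | h | h | h <;> tauto
      · -- path B - A - C
        have hcomp := vec_comp A B C D ![1,0,2,3]
        apply sixChoices_comp _ ![1,0,2,3] (by decide)
        rw [hcomp]
        exact six_path B A C D hB hA hC hD
          ⟨v, Finset.mem_inter.mpr ⟨hvB, hvA⟩⟩ hAC (not_nonempty hBC) hBD hAD hCD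
    · by_cases hAD : (A ∩ D).Nonempty
      · have hBC : B ∩ C = ∅ := by
          rw [Finset.eq_empty_iff_forall_notMem]
          intro z hz
          rw [Finset.mem_inter] at hz
          obtain ⟨wd, hwd⟩ := hAD
          rw [Finset.mem_inter] at hwd
          rcases hncov wd z with h | h | h | h <;> tauto
        by_cases hBD : (B ∩ D).Nonempty
        · -- triangle A B D, C isolated
          have hcomp := vec_comp A B C D ![0,1,3,2]
          apply sixChoices_comp _ ![0,1,3,2] (by decide)
          rw [hcomp]
          refine six_tri A B D C hA hB hD hC ⟨v, by simp [hvA, hvB]⟩ hAD hBD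
            (not_nonempty hAC) hBC (by rwa [Finset.inter_comm]) ?_
          intro z hzA hzB hzD
          rcases hncov z cc with h | h | h | h <;> tauto
        · -- path B - A - D
          have hcomp := vec_comp A B C D ![1,0,3,2]
          apply sixChoices_comp _ ![1,0,3,2] (by decide)
          rw [hcomp]
          exact six_path B A D C hB hA hD hC ⟨v, Finset.mem_inter.mpr ⟨hvB, hvA⟩⟩ hAD
            (not_nonempty hBD) hBC (not_nonempty hAC) (by rwa [Finset.inter_comm])
      · by_cases hBC : (B ∩ C).Nonempty
        · -- path A - B - C ; need B ∩ D = ∅ (star at B)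
          have hBD : B ∩ D = ∅ := by
            rw [Finset.eq_empty_iff_forall_notMem]
            intro z hz
            rw [Finset.mem_inter] at hz
            obtain ⟨hzB, hzD⟩ := hz
            obtain ⟨wc, hwc⟩ := hBC
            rw [Finset.mem_inter] at hwc
            obtain ⟨hwcB, hwcC⟩ := hwc
            have hw' := hmemB wc hwcB
            have hz' := hmemB z hzB
            rcases hncov v q with ⟨h1, _⟩ | ⟨h1, _⟩ | ⟨h1, h2⟩ | ⟨h1, h2⟩
            · exact h1 hvA
            · exact h1 hvB
            · rcases hw' with rfl | rfl
              · exact h1 hwcC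
              · exact h2 hwcC
            · rcases hz' with rfl | rfl
              · exact h1 hzD
              · exact h2 hzD
          exact six_path A B C D hA hB hC hD ⟨v, by simp [hvA, hvB]⟩ hBC
            (not_nonempty hAC) (not_nonempty hAD) hBD hCD
        · by_cases hBD : (B ∩ D).Nonempty
          · -- path A - B - D
            have hcomp := vec_comp A B C D ![0,1,3,2]
            apply sixChoices_comp _ ![0,1,3,2] (by decide)
            rw [hcomp]
            exact six_path A B D C hA hB hD hC ⟨v, by simp [hvA, hvB]⟩ hBD
              (not_nonempty hAD) (not_nonempty hAC) (not_nonempty hBC)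
              (by rwa [Finset.inter_comm])
          · -- single intersecting pair
            exact six_single A B C D hA hB hC hD ⟨v, by simp [hvA, hvB]⟩ hABeq
              (not_nonempty hAC) (not_nonempty hAD) (not_nonempty hBC)
              (not_nonempty hBD) hCD

lemma six_main (e : Fin 4 → Finset ℕ) (h2 : ∀ i, (e i).card = 2) : SixChoices e := by
  by_cases hcov : ∃ x y : ℕ, ∀ i, x ∈ e i ∨ y ∈ e i
  · obtain ⟨x, y, hxy⟩ := hcov
    refine ⟨fun _ i => if x ∈ e i then x else y, fun p i => ?_, fun p q _ => ?_⟩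
    · by_cases h : x ∈ e i
      · simp [h]
      · simpa [h] using (hxy i).resolve_left h
    · have hsub : (Finset.univ.image fun i => if x ∈ e i then x else y) ⊆ {x, y} := by
        intro z hz
        simp only [Finset.mem_image] at hz
        obtain ⟨i, _, hi⟩ := hz
        split at hi <;> simp [← hi]
      refine le_trans (Finset.card_le_card (le_trans Finset.inter_subset_left hsub)) ?_
      exact le_trans (Finset.card_insert_le _ _) (by simp)
  · push_neg at hcov
    have hev : e = ![e 0, e 1, e 2, e 3] := by
      funext i; fin_cases i <;> rfl
    have key : ∀ (a b c d : Fin 4), ({a,b,c,d} : Finset (Fin 4)) = Finset.univ →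
        ∀ x y : ℕ, (x ∉ e a ∧ y ∉ e a) ∨ (x ∉ e b ∧ y ∉ e b) ∨ (x ∉ e c ∧ y ∉ e c) ∨ (x ∉ e d ∧ y ∉ e d) := by
      intro a b c d huniv x y
      obtain ⟨i, hi1, hi2⟩ := hcov x y
      have : i ∈ ({a,b,c,d} : Finset (Fin 4)) := by rw [huniv]; exact Finset.mem_univ i
      simp only [Finset.mem_insert, Finset.mem_singleton] at this
      rcases this with rfl | rfl | rfl | rfl <;> tauto
    by_cases h01 : (e 0 ∩ e 1).Nonempty
    · rw [hev]
      exact caseB _ _ _ _ (h2 0) (h2 1) (h2 2) (h2 3) (key 0 1 2 3 (by decide)) h01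
    by_cases h02 : (e 0 ∩ e 2).Nonempty
    · apply sixChoices_comp _ ![0,2,1,3] (by decide)
      have : e ∘ ![0,2,1,3] = ![e 0, e 2, e 1, e 3] := by funext i; fin_cases i <;> rfl
      rw [this]
      exact caseB _ _ _ _ (h2 0) (h2 2) (h2 1) (h2 3) (key 0 2 1 3 (by decide)) h02
    by_cases h03 : (e 0 ∩ e 3).Nonempty
    · apply sixChoices_comp _ ![0,3,1,2] (by decide)
      have : e ∘ ![0,3,1,2] = ![e 0, e 3, e 1, e 2] := by funext i; fin_cases i <;> rfl
      rw [this]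
      exact caseB _ _ _ _ (h2 0) (h2 3) (h2 1) (h2 2) (key 0 3 1 2 (by decide)) h03
    by_cases h12 : (e 1 ∩ e 2).Nonempty
    · apply sixChoices_comp _ ![1,2,0,3] (by decide)
      have : e ∘ ![1,2,0,3] = ![e 1, e 2, e 0, e 3] := by funext i; fin_cases i <;> rfl
      rw [this]
      exact caseB _ _ _ _ (h2 1) (h2 2) (h2 0) (h2 3) (key 1 2 0 3 (by decide)) h12
    by_cases h13 : (e 1 ∩ e 3).Nonempty
    · apply sixChoices_comp _ ![1,3,0,2] (by decide)
      have : e ∘ ![1,3,0,2] = ![e 1, e 3, e 0, e 2] := by funext i; fin_cases i <;> rfl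
      rw [this]
      exact caseB _ _ _ _ (h2 1) (h2 3) (h2 0) (h2 2) (key 1 3 0 2 (by decide)) h13
    by_cases h23 : (e 2 ∩ e 3).Nonempty
    · apply sixChoices_comp _ ![2,3,0,1] (by decide)
      have : e ∘ ![2,3,0,1] = ![e 2, e 3, e 0, e 1] := by funext i; fin_cases i <;> rfl
      rw [this]
      exact caseB _ _ _ _ (h2 2) (h2 3) (h2 0) (h2 1) (key 2 3 0 1 (by decide)) h23
    · rw [hev]
      exact six_match _ _ _ _ (h2 0) (h2 1) (h2 2) (h2 3)
        (not_nonempty h01) (not_nonempty h02) (not_nonempty h03)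
        (not_nonempty h12) (not_nonempty h13) (not_nonempty h23)

theorem stmt_8 (L : Fin 4 ⊕ Fin 5 → Finset ℕ)
    (hx : ∀ x : Fin 4, (L (Sum.inl x)).card = 2)
    (hy : ∀ y : Fin 5, (L (Sum.inr y)).card = 3) :
    ∃ f, properListColoring (completeBipartiteGraph (Fin 4) (Fin 5)) L f := by
  obtain ⟨cs, hmem, hcard⟩ := six_main (fun i => L (Sum.inl i)) (fun i => hx i)
  have hgood : ∃ p : Fin 6, ∀ j : Fin 5, ¬ L (Sum.inr j) ⊆ Finset.univ.image (cs p) := by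
    by_contra h
    push_neg at h
    choose g hg using h
    have hginj : Function.Injective g := by
      intro p q hpq2
      by_contra hne
      have h1 := hg p
      have h2 := hg q
      rw [hpq2] at h1
      have hle : (L (Sum.inr (g q))).card ≤ 2 :=
        le_trans (Finset.card_le_card (Finset.subset_inter h1 h2)) (hcard p q hne)
      rw [hy] at hle
      omega
    have := Fintype.card_le_of_injective g hginj
    simp at this
  obtain ⟨p, hp⟩ := hgood
  have hch : ∀ j : Fin 5, ∃ z ∈ L (Sum.inr j), z ∉ Finset.univ.image (cs p) := by
    intro j
    exact Finset.not_subset.mp (hp j)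
  choose h hmem2 hnot using hch
  refine ⟨Sum.elim (cs p) h, ?_, ?_⟩
  · rintro (i | j)
    · exact hmem p i
    · exact hmem2 j
  · rintro (i | j) (i' | j') hadj <;>
      simp only [completeBipartiteGraph_adj, Sum.isLeft_inl, Sum.isRight_inr,
        Sum.isLeft_inr, Sum.isRight_inl, and_true, and_false, true_and, false_and,
        or_false, false_or] at hadj
    · exact absurd hadj (by simp)
    · intro heq
      simp only [Sum.elim_inl, Sum.elim_inr] at heq
      exact hnot j' (heq ▸ Finset.mem_image_of_mem _ (Finset.mem_univ i))
    · intro heq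
      simp only [Sum.elim_inl, Sum.elim_inr] at heq
      exact hnot j (heq.symm ▸ Finset.mem_image_of_mem _ (Finset.mem_univ i'))
    · exact absurd hadj (by simp)
end

section
/- If a graph G is not f-choosable for a function f: V(G) → ℕ with f(v) < |V(G)| for all v, then there exists a list assignment L with |L(v)| = f(v) for all v, using fewer than |V(G)| colors in total (i.e., |⋃_v L(v)| < |V(G)|), such that G has no proper L-coloring. -/
open Finset

theorem stmt_9 {V : Type*} [Fintype V] [DecidableEq V] (G : SimpleGraph V) (g : V → ℕ)
    (hg : ∀ v, g v < Fintype.card V)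
    (hnot : ¬ ∀ L : V → Finset ℕ, (∀ v, (L v).card = g v) →
        ∃ f, properListColoring G L f) :
    ∃ L : V → Finset ℕ, (∀ v, (L v).card = g v) ∧
      (Finset.univ.biUnion L).card < Fintype.card V ∧
      ¬ ∃ f, properListColoring G L f := by
  classical
  push_neg at hnot
  obtain ⟨L, hLcard, hLbad⟩ := hnot
  -- a set of maximum deficiency
  obtain ⟨A, -, hAmax⟩ := Finset.exists_max_image (univ : Finset (Finset V))
      (fun s => (s.card : ℤ) - ((s.biUnion L).card : ℤ)) ⟨∅, mem_univ ∅⟩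
  set NA := A.biUnion L with hNAdef
  -- Hall's condition must fail, since an SDR would give a proper coloring
  have hviol : ∃ s : Finset V, ((s.biUnion L).card : ℤ) < s.card := by
    by_contra h
    push_neg at h
    have hall : ∀ s : Finset V, s.card ≤ (s.biUnion L).card := fun s => by
      exact_mod_cast h s
    obtain ⟨f, hfinj, hfmem⟩ := (Finset.all_card_le_biUnion_card_iff_exists_injective L).mp hall
    exact hLbad f ⟨hfmem, fun u v huv he => (G.ne_of_adj huv) (hfinj he)⟩
  have hdef : 1 ≤ (A.card : ℤ) - (NA.card : ℤ) := by
    obtain ⟨s, hs⟩ := hviol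
    have h2 := hAmax s (mem_univ s)
    omega
  -- Hall's condition for the complement of A, using colors outside NA
  have hall2 : ∀ s : Finset {v : V // v ∉ A},
      s.card ≤ (s.biUnion (fun v => L v.1 \ NA)).card := by
    intro s
    set s' := s.image (Subtype.val) with hs'
    have hs'card : s'.card = s.card := card_image_of_injective _ Subtype.val_injective
    have hdisj : Disjoint A s' := by
      rw [Finset.disjoint_right]
      intro a ha
      simp only [hs', mem_image] at ha
      obtain ⟨b, -, rfl⟩ := ha
      exact b.2
    have hbu : (A ∪ s').biUnion L = NA ∪ s'.biUnion L := by
      ext c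
      simp only [hNAdef, mem_biUnion, mem_union, or_and_right, exists_or]
    have hsub : s.biUnion (fun v => L v.1 \ NA) = (s'.biUnion L) \ NA := by
      ext c
      simp only [mem_biUnion, mem_sdiff, hs', mem_image]
      constructor
      · rintro ⟨v, hv, hc, hcn⟩
        exact ⟨⟨v.1, ⟨v, hv, rfl⟩, hc⟩, hcn⟩
      · rintro ⟨⟨a, ⟨v, hv, rfl⟩, hc⟩, hcn⟩
        exact ⟨v, hv, hc, hcn⟩
    have key := hAmax (A ∪ s') (mem_univ _)
    have hcardu : (A ∪ s').card = A.card + s'.card := card_union_of_disjoint hdisj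
    have hcardc : ((A ∪ s').biUnion L).card ≤ NA.card + ((s'.biUnion L) \ NA).card := by
      rw [hbu]
      calc (NA ∪ s'.biUnion L).card = (NA ∪ (s'.biUnion L \ NA)).card := by
            rw [union_sdiff_self_eq_union]
          _ ≤ NA.card + ((s'.biUnion L) \ NA).card := card_union_le _ _
    rw [hsub, ← hs'card]
    have := card_union_le NA (s'.biUnion L)
    omega
  obtain ⟨m, hminj, hmmem⟩ :=
    (Finset.all_card_le_biUnion_card_iff_exists_injective (fun v : {v : V // v ∉ A} => L v.1 \ NA)).mp hall2
  -- the induced subgraph on A cannot be properly colored from L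
  have hAbad : ¬ ∃ φ : V → ℕ, (∀ v ∈ A, φ v ∈ L v) ∧
      ∀ u v, u ∈ A → v ∈ A → G.Adj u v → φ u ≠ φ v := by
    rintro ⟨φ, hφ1, hφ2⟩
    refine hLbad (fun v => if h : v ∈ A then φ v else m ⟨v, h⟩) ⟨?_, ?_⟩
    · intro v
      by_cases h : v ∈ A
      · simpa [h] using hφ1 v h
      · simpa [h] using (mem_sdiff.mp (hmmem ⟨v, h⟩)).1
    · intro u v huv
      have hmNA : ∀ (w : V) (hw : w ∉ A), m ⟨w, hw⟩ ∉ NA :=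
        fun w hw => (mem_sdiff.mp (hmmem ⟨w, hw⟩)).2
      by_cases hu : u ∈ A <;> by_cases hv : v ∈ A <;> simp only [hu, hv, dif_pos, dif_neg,
        not_false_iff]
      · exact hφ2 u v hu hv huv
      · intro he
        exact hmNA v hv (he ▸ mem_biUnion.mpr ⟨u, hu, hφ1 u hu⟩)
      · intro he
        exact hmNA u hu (he.symm ▸ mem_biUnion.mpr ⟨v, hv, hφ1 v hv⟩)
      · intro he
        exact (G.ne_of_adj huv) (congrArg Subtype.val (hminj he))
  -- cardinality facts
  have hAcard : A.card ≤ Fintype.card V := by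
    simpa using card_le_card (subset_univ A)
  have hNAcard : NA.card + 1 ≤ A.card := by omega
  have hn1 : 1 ≤ Fintype.card V := le_trans (by omega) hAcard
  have hNAle : NA.card ≤ Fintype.card V - 1 := by omega
  -- a palette of size n - 1 containing NA
  obtain ⟨P, hNAP, hPcard⟩ := Infinite.exists_superset_card_eq NA (Fintype.card V - 1) hNAle
  -- lists for vertices outside A: arbitrary subsets of P of the right size
  have hsub : ∀ v : V, ∃ t ⊆ P, t.card = g v := by
    intro v
    apply Finset.exists_subset_card_eq
    rw [hPcard]
    have := hg v
    omega
  choose T hT1 hT2 using hsub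
  refine ⟨fun v => if v ∈ A then L v else T v, fun v => ?_, ?_, ?_⟩
  · by_cases h : v ∈ A <;> simp [h, hLcard, hT2]
  · have hsubP : (univ.biUnion fun v => if v ∈ A then L v else T v) ⊆ P := by
      intro c hc
      rw [mem_biUnion] at hc
      obtain ⟨v, -, hcv⟩ := hc
      by_cases h : v ∈ A
      · rw [if_pos h] at hcv
        exact hNAP (mem_biUnion.mpr ⟨v, h, hcv⟩)
      · rw [if_neg h] at hcv
        exact hT1 v hcv
    have := card_le_card hsubP
    omega
  · rintro ⟨f, hf1, hf2⟩
    refine hAbad ⟨f, fun v hv => ?_, fun u v hu hv huv => hf2 u v huv⟩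
    simpa [hv] using hf1 v
end

section
/- Every complete bipartite graph K_{m,n} with m, n ≥ 2 is degree-choosable: for every list assignment L with |L(v)| = deg(v) for every vertex v, K_{m,n} has a proper L-coloring. -/
/-!
Color the right side first by a choice function `d`. A left vertex `x` can then be colored
unless its list is covered by the colors of `d`, and since `|L x| = n ≥ |image d|` this happens
only when `image d = L x`. If two right lists meet, choosing a common color twice makes
`|image d| < n`. If the right lists are pairwise disjoint, distinct choice functions have distinct
images, so there are `m ^ n > m` images and one of them is none of the `m` left lists.
-/

open Finset Function

theorem exists_properListColoring_of_not_subset_image {α β : Type*} [Fintype β]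
    (L : α ⊕ β → Finset ℕ) (d : β → ℕ) (hd : ∀ y, d y ∈ L (.inr y))
    (hfree : ∀ x, ¬ L (.inl x) ⊆ univ.image d) :
    ∃ f, properListColoring (completeBipartiteGraph α β) L f := by
  choose c hcL hcd using fun x => not_subset.mp (hfree x)
  refine ⟨Sum.elim c d, ?_, ?_⟩
  · rintro (x | y)
    exacts [hcL x, hd y]
  · rintro (x | y) (x' | y') hadj <;> simp only [completeBipartiteGraph_adj] at hadj
    · simp at hadj
    · exact fun h : c x = d y' => hcd x (h ▸ mem_image_of_mem d (mem_univ y'))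
    · exact fun h : d y = c x' => hcd x' (h ▸ mem_image_of_mem d (mem_univ y))
    · simp at hadj

theorem exists_mem_card_image_lt {ι γ : Type*} [Fintype ι] [DecidableEq ι] [DecidableEq γ]
    (L : ι → Finset γ) (hL : ∀ i, (L i).Nonempty) {i j : ι} (hij : i ≠ j)
    (hmeet : ¬ Disjoint (L i) (L j)) :
    ∃ d : ι → γ, (∀ k, d k ∈ L k) ∧ (univ.image d).card < Fintype.card ι := by
  obtain ⟨c, hci, hcj⟩ := not_disjoint_iff.mp hmeet
  choose d₀ hd₀ using hL
  let d := update (update d₀ i c) j c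
  have hd : ∀ k, d k ∈ L k := by
    intro k
    by_cases hkj : k = j
    · subst hkj; simpa [d] using hcj
    by_cases hki : k = i
    · subst hki; simpa [d, hkj] using hci
    · simpa [d, hkj, hki] using hd₀ k
  have hnotInj : ¬ Set.InjOn d (univ : Finset ι) := fun hinj =>
    hij (hinj (by simp) (by simp) (by simp [d, hij]))
  exact ⟨d, hd, lt_of_le_of_ne card_image_le (mt card_image_iff.mp hnotInj)⟩

theorem injOn_image_univ_piFinset {ι γ : Type*} [Fintype ι] [DecidableEq ι] [DecidableEq γ]
    {L : ι → Finset γ} (hL : Pairwise (Disjoint on L)) :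
    Set.InjOn (fun d : ι → γ => univ.image d) (Fintype.piFinset L) := by
  intro d hd d' hd' (himage : univ.image d = univ.image d')
  rw [mem_coe, Fintype.mem_piFinset] at hd hd'
  funext k
  have hk : d k ∈ univ.image d' := himage ▸ mem_image_of_mem d (mem_univ k)
  obtain ⟨k', -, hk'⟩ := mem_image.mp hk
  obtain rfl | hne := eq_or_ne k' k
  · exact hk'.symm
  · exact absurd (hk' ▸ hd' k') (disjoint_left.mp (hL hne.symm) (hd k))

theorem exists_mem_image_notMem {ι γ : Type*} [Fintype ι] [DecidableEq ι] [DecidableEq γ]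
    {L : ι → Finset γ} (hL : Pairwise (Disjoint on L)) (S : Finset (Finset γ))
    (hS : S.card < ∏ i, (L i).card) :
    ∃ d : ι → γ, (∀ i, d i ∈ L i) ∧ univ.image d ∉ S := by
  have hcard : S.card < ((Fintype.piFinset L).image fun d => univ.image d).card := by
    rwa [card_image_of_injOn (injOn_image_univ_piFinset hL), Fintype.card_piFinset]
  obtain ⟨_, himage, hnotMem⟩ := exists_mem_notMem_of_card_lt_card hcard
  obtain ⟨d, hd, rfl⟩ := mem_image.mp himage
  exact ⟨d, Fintype.mem_piFinset.mp hd, hnotMem⟩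

theorem stmt_10 (m n : ℕ) (hm : 2 ≤ m) (hn : 2 ≤ n) (L : Fin m ⊕ Fin n → Finset ℕ)
    (hx : ∀ x : Fin m, (L (Sum.inl x)).card = n)
    (hy : ∀ y : Fin n, (L (Sum.inr y)).card = m) :
    ∃ f, properListColoring (completeBipartiteGraph (Fin m) (Fin n)) L f := by
  suffices ∃ d : Fin n → ℕ, (∀ y, d y ∈ L (.inr y)) ∧ ∀ x, univ.image d ≠ L (.inl x) by
    obtain ⟨d, hd, hne⟩ := this
    refine exists_properListColoring_of_not_subset_image L d hd fun x hsub => hne x ?_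
    refine (eq_of_subset_of_card_le hsub ?_).symm
    simpa [hx] using card_image_le (s := univ) (f := d)
  by_cases hdisj : Pairwise (Disjoint on fun y => L (.inr y))
  · have hS : (univ.image fun x => L (.inl x)).card < ∏ y, (L (.inr y)).card := by
      calc (univ.image fun x => L (.inl x)).card ≤ m := card_image_le.trans (by simp)
        _ = m ^ 1 := (pow_one m).symm
        _ < m ^ n := Nat.pow_lt_pow_right hm (by omega)
        _ = ∏ y, (L (.inr y)).card := by simp [hy]
    obtain ⟨d, hd, hnotMem⟩ := exists_mem_image_notMem hdisj _ hS
    exact ⟨d, hd, fun x h => hnotMem (h ▸ mem_image_of_mem _ (mem_univ x))⟩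
  · obtain ⟨y₁, y₂, hne, hmeet⟩ :
        ∃ y₁ y₂ : Fin n, y₁ ≠ y₂ ∧ ¬ Disjoint (L (.inr y₁)) (L (.inr y₂)) := by
      simpa [Pairwise] using hdisj
    have hL : ∀ y, (L (.inr y)).Nonempty := fun y => card_pos.mp (by rw [hy]; omega)
    obtain ⟨d, hd, hcard⟩ := exists_mem_card_image_lt _ hL hne hmeet
    refine ⟨d, hd, fun x h => ?_⟩
    rw [h, hx, Fintype.card_fin] at hcard
    exact lt_irrefl n hcard
end

section
/- Let G = K_{n_1,...,n_k} with k ≥ 2 and n_1 ≤ ... ≤ n_k, and let s = n_1 + ... + n_{k-1}. For every (s+1)-assignment L for G and every request r of L with nonempty domain D (i.e., r: D → colors with r(v) ∈ L(v)), there exists a proper L-coloring of G satisfying at least |D|/k of the vertex requests, i.e., f(v) = r(v) for at least |D|/k vertices v ∈ D. -/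
/-!
Induction on the number of parts, peeling off a smallest part `P₀` (of size `n₀`). Once `P₀` is
precoloured by some `σ`, the colours `σ(P₀)` are deleted from all other lists; the remaining `k`
parts still satisfy the hypothesis (the bound `s` drops by at most `n₀`), so by induction a
`1/k` fraction of the requests outside `P₀` whose colour is not in `σ(P₀)` can be honoured. This
suffices as soon as `(k + 1)·B + k·|D₀| ≤ |D_r| + k(k + 1)·t`, where `D₀`, `D_r` are the requests
inside and outside `P₀`, `B` counts the requests of `D_r` blocked by `σ(P₀)` and `t` those of
`D₀` honoured by `σ`.

Two precolourings compete: one honours all of `D₀` and colours the rest of `P₀` with few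
blocked requests, the other avoids the requested colours `R = r(D₀)` altogether. Both come from
a weighted hitting-set bound: if each of `m` sets has more than `a` colours, one can pick a
representative of every set so that the chosen colours carry at most a fraction `m/(a + m)` of
the total weight. Since every list has more than `s ≥ k·n₀` colours, an averaging argument shows
that one of the two precolourings meets the criterion.
-/

open Finset

section Representatives

variable {ι α : Type*} [DecidableEq α]

theorem mul_add_le_of_min_weight {a m m' w₀ x W' W : ℕ} (hm : m' < m) (hx : x ≤ W')
    (hrec : (a + m') * x ≤ m' * W') (hW : W' + w₀ ≤ W) (hw₀ : (a + m + 1) * w₀ ≤ W) :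
    (a + m) * (w₀ + x) ≤ m * W := by
  rcases Nat.eq_zero_or_pos m' with rfl | hm'
  · rcases Nat.eq_zero_or_pos a with rfl | ha
    · nlinarith
    · have : x = 0 := by nlinarith
      subst this; nlinarith
  · have hx' : (a + m - 1) * x ≤ (m - 1) * W' := by
      refine Nat.le_of_mul_le_mul_left ?_ hm'
      have h1 : m' * (a + m - 1) ≤ (m - 1) * (a + m') := by
        zify [show 1 ≤ m by omega, show 1 ≤ a + m by omega]; nlinarith
      calc m' * ((a + m - 1) * x) = (m' * (a + m - 1)) * x := by ring
        _ ≤ ((m - 1) * (a + m')) * x := Nat.mul_le_mul_right _ h1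
        _ = (m - 1) * ((a + m') * x) := by ring
        _ ≤ (m - 1) * (m' * W') := Nat.mul_le_mul_left _ hrec
        _ = m' * ((m - 1) * W') := by ring
    refine Nat.le_of_mul_le_mul_left ?_ (show 0 < a + m - 1 by omega)
    zify [show 1 ≤ m by omega, show 1 ≤ a + m by omega] at hx' hw₀ hW ⊢
    nlinarith [mul_le_mul_of_nonneg_left hW (show (0:ℤ) ≤ (a + m) * (m - 1) by nlinarith)]

theorem exists_subset_card_eq_mul_sum_le (w : α → ℕ) {U : Finset α} {j : ℕ} (hj : j ≤ #U) :
    ∃ T ⊆ U, #T = j ∧ j * ∑ c ∈ U, w c ≤ #U * ∑ c ∈ T, w c := by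
  induction U using Finset.strongInduction with
  | H U ih =>
  rcases hj.eq_or_lt with rfl | hlt
  · exact ⟨U, subset_rfl, rfl, le_rfl⟩
  obtain ⟨c, hc, hmin⟩ := exists_min_image U w (card_pos.mp (by omega))
  have hcard := card_erase_of_mem hc
  obtain ⟨T, hTU, hT, hsum⟩ := ih (U.erase c) (erase_ssubset hc) (by omega)
  refine ⟨T, hTU.trans (erase_subset c U), hT, ?_⟩
  have hlight : #(U.erase c) * w c ≤ ∑ x ∈ U.erase c, w x := by
    simpa using card_nsmul_le_sum _ w (w c) fun x hx => hmin x (mem_of_mem_erase hx)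
  rw [← add_sum_erase U w hc]
  rw [hcard] at hsum hlight
  obtain ⟨M, hM⟩ : ∃ M, #U = M + 1 := ⟨#U - 1, by omega⟩
  rw [hM, Nat.add_sub_cancel] at hsum hlight
  rw [hM]
  rcases Nat.eq_zero_or_pos M with rfl | hMpos
  · obtain rfl : j = 0 := by omega
    simp
  refine Nat.le_of_mul_le_mul_left ?_ hMpos
  nlinarith

theorem exists_representatives_sum_le_of_card_biUnion_le [Nonempty α] (w : α → ℕ) {a : ℕ}
    {J : Finset ι} {A : ι → Finset α} (hA : ∀ u ∈ J, a < #(A u)) (hJ : J.Nonempty)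
    (hU : #(J.biUnion A) ≤ a + #J) :
    ∃ σ : ι → α, (∀ u ∈ J, σ u ∈ A u) ∧
      (a + #J) * ∑ c ∈ J.image σ, w c ≤ #J * ∑ c ∈ J.biUnion A, w c := by
  obtain ⟨u₀, hu₀⟩ := hJ
  have hAU : ∀ u ∈ J, A u ⊆ J.biUnion A := fun u hu => subset_biUnion_of_mem A hu
  obtain ⟨T, hTU, hT, hsum⟩ := exists_subset_card_eq_mul_sum_le w
    ((hA u₀ hu₀).le.trans (card_le_card (hAU u₀ hu₀)))
  have hne : ∀ u ∈ J, (A u \ T).Nonempty := fun u hu => by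
    have := le_card_sdiff T (A u); have := hA u hu
    exact card_pos.mp (by omega)
  choose! σ hσ using hne
  refine ⟨σ, fun u hu => (mem_sdiff.mp (hσ u hu)).1, ?_⟩
  have himage : J.image σ ⊆ J.biUnion A \ T := image_subset_iff.mpr fun u hu =>
    mem_sdiff.mpr ⟨hAU u hu (mem_sdiff.mp (hσ u hu)).1, (mem_sdiff.mp (hσ u hu)).2⟩
  have hle := sum_le_sum_of_subset (f := w) himage
  have hsplit := sum_sdiff hTU (f := w)
  have := Nat.mul_le_mul_right (∑ c ∈ T, w c) hU
  nlinarith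

/- If the sets cover few colours, drop the `a` heaviest ones; otherwise the lightest colour `c₀`
represents every set containing it, and we recurse on the sets avoiding `c₀`. -/
theorem exists_representatives_sum_le [Nonempty α] (w : α → ℕ) (a : ℕ) (J : Finset ι)
    (A : ι → Finset α) (hA : ∀ u ∈ J, a < #(A u)) :
    ∃ σ : ι → α, (∀ u ∈ J, σ u ∈ A u) ∧
      (a + #J) * ∑ c ∈ J.image σ, w c ≤ #J * ∑ c ∈ J.biUnion A, w c := by
  induction J using Finset.strongInduction with
  | H J ih =>
  rcases J.eq_empty_or_nonempty with rfl | hJ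
  · exact ⟨fun _ => Classical.arbitrary α, by simp, by simp⟩
  set U := J.biUnion A
  by_cases hU : #U ≤ a + #J
  · exact exists_representatives_sum_le_of_card_biUnion_le w hA hJ hU
  obtain ⟨c₀, hc₀, hmin⟩ := exists_min_image U w (card_pos.mp (by omega))
  have hlight : (a + #J + 1) * w c₀ ≤ ∑ c ∈ U, w c :=
    (Nat.mul_le_mul_right (w c₀) (show a + #J + 1 ≤ #U by omega)).trans
      (by simpa using card_nsmul_le_sum U w (w c₀) hmin)
  obtain ⟨u₁, hu₁, hc₀u₁⟩ := mem_biUnion.mp hc₀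
  set J' := {u ∈ J | c₀ ∉ A u}
  have hJ' : J' ⊂ J := filter_ssubset.mpr ⟨u₁, hu₁, not_not.mpr hc₀u₁⟩
  obtain ⟨σ', hσ'A, hσ'⟩ := ih J' hJ' fun u hu => hA u (filter_subset _ _ hu)
  refine ⟨fun u => if c₀ ∈ A u then c₀ else σ' u, fun u hu => ?_, ?_⟩
  · dsimp only
    split_ifs with h
    exacts [h, hσ'A u (mem_filter.mpr ⟨hu, h⟩)]
  have himage : J.image (fun u => if c₀ ∈ A u then c₀ else σ' u) ⊆ insert c₀ (J'.image σ') := by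
    refine image_subset_iff.mpr fun u hu => ?_
    split_ifs with h
    · exact mem_insert_self _ _
    · exact mem_insert_of_mem (mem_image_of_mem σ' (mem_filter.mpr ⟨hu, h⟩))
  have hinsert : ∑ c ∈ insert c₀ (J'.image σ'), w c ≤ w c₀ + ∑ c ∈ J'.image σ', w c := by
    by_cases h : c₀ ∈ J'.image σ'
    · rw [insert_eq_of_mem h]; omega
    · rw [sum_insert h]
  have hσ'U : J'.image σ' ⊆ J'.biUnion A := image_subset_iff.mpr fun u hu =>
    mem_biUnion.mpr ⟨u, hu, hσ'A u hu⟩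
  have hU' : J'.biUnion A ⊆ U.erase c₀ := fun c hc => by
    obtain ⟨u, hu, hcu⟩ := mem_biUnion.mp hc
    refine mem_erase.mpr ⟨?_, subset_biUnion_of_mem A (filter_subset _ _ hu) hcu⟩
    rintro rfl
    exact (mem_filter.mp hu).2 hcu
  have hW : ∑ c ∈ J'.biUnion A, w c + w c₀ ≤ ∑ c ∈ U, w c := by
    rw [← sum_erase_add U w hc₀]
    exact Nat.add_le_add_right (sum_le_sum_of_subset hU') _
  calc (a + #J) * ∑ c ∈ J.image _, w c
      ≤ (a + #J) * (w c₀ + ∑ c ∈ J'.image σ', w c) :=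
        Nat.mul_le_mul_left _ ((sum_le_sum_of_subset himage).trans hinsert)
    _ ≤ #J * ∑ c ∈ U, w c :=
        mul_add_le_of_min_weight (card_lt_card hJ') (sum_le_sum_of_subset hσ'U) hσ' hW hlight

theorem exists_representatives_card_le [Nonempty α] {β : Type*} (Q : Finset β) (r : β → α)
    (a : ℕ) (J : Finset ι) (A : ι → Finset α) (hA : ∀ u ∈ J, a < #(A u)) :
    ∃ σ : ι → α, (∀ u ∈ J, σ u ∈ A u) ∧
      (a + #J) * #{v ∈ Q | r v ∈ J.image σ} ≤ #J * #{v ∈ Q | r v ∈ J.biUnion A} := by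
  simpa only [sum_card_fiberwise_eq_card_filter] using
    exists_representatives_sum_le (fun c => #{v ∈ Q | r v = c}) a J A hA

end Representatives

section Precoloring

variable {V α : Type*} [DecidableEq V] [DecidableEq α]

/- `Hb` and `Ba` are the numbers of outside requests blocked by the two precolourings of a part of
size `n` carrying `d` requests (`m` vertices without request); `F + Dc = W` splits the outside
requests according to whether their colour is requested inside the part (`ρ` such colours). -/
theorem precoloring_dichotomy {k s n d m ρ W F Dc Hb Ba : ℕ} (hk : 0 < k) (hn : 0 < n)
    (hs : k * n ≤ s) (hρ : ρ ≤ d) (hm : m + d = n) (hW : F + Dc = W)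
    (hHb : (s - ρ + n) * Hb ≤ n * Dc) (hBa : (s + m) * Ba ≤ (s + m) * F + m * Dc) (hBaW : Ba ≤ W) :
    (k + 1) * Hb + k * d ≤ W ∨ (k + 1) * Ba ≤ W + k * k * d := by
  rw [or_iff_not_imp_left, not_le]
  intro hHb_large
  by_cases hsmall : W ≤ k * d
  · nlinarith
  obtain ⟨e, he⟩ : ∃ e, W = k * d + e := ⟨W - k * d, by omega⟩
  have hspos : 0 < s + m := by nlinarith
  have hblocked : k * e * (s + m) ≤ (k + 1) * s * Dc :=
    calc k * e * (s + m) ≤ k * ((k + 1) * Hb * (s - ρ + n)) := by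
          rw [mul_assoc]
          refine Nat.mul_le_mul_left _ (Nat.mul_le_mul (by omega) (by omega))
      _ ≤ k * ((k + 1) * (n * Dc)) := by
          rw [mul_assoc, mul_comm Hb]; exact Nat.mul_le_mul_left _ (Nat.mul_le_mul_left _ hHb)
      _ = (k + 1) * (k * n) * Dc := by ring
      _ ≤ (k + 1) * s * Dc := Nat.mul_le_mul_right _ (Nat.mul_le_mul_left _ hs)
  have hkey : (k + 1) * Ba + k * e ≤ (k + 1) * W := by
    refine Nat.le_of_mul_le_mul_right ?_ hspos
    subst hW
    nlinarith [Nat.mul_le_mul_left (k + 1) hBa]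
  nlinarith

theorem exists_precoloring_avoiding [Nonempty α] {ι β : Type*} {s : ℕ} (P : Finset ι)
    (L : ι → Finset α) (R : Finset α) (Q : Finset β) (r : β → α) (hR : #R ≤ s)
    (hL : ∀ u ∈ P, s < #(L u)) :
    ∃ σ : ι → α, (∀ u ∈ P, σ u ∈ L u) ∧
      (s - #R + #P) * #{v ∈ Q | r v ∈ P.image σ} ≤ #P * #{v ∈ Q | r v ∉ R} := by
  obtain ⟨σ, hσ, hbound⟩ := exists_representatives_card_le {v ∈ Q | r v ∉ R} r (s - #R) P
    (fun u => L u \ R) fun u hu => by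
      have := le_card_sdiff R (L u); have := hL u hu; omega
  refine ⟨σ, fun u hu => (mem_sdiff.mp (hσ u hu)).1, ?_⟩
  have hQ : {v ∈ Q | r v ∈ P.image σ} = {v ∈ {v ∈ Q | r v ∉ R} | r v ∈ P.image σ} := by
    rw [filter_filter]
    refine filter_congr fun v _ => ⟨fun h => ⟨?_, h⟩, And.right⟩
    obtain ⟨u, hu, hσu⟩ := mem_image.mp h
    exact hσu ▸ (mem_sdiff.mp (hσ u hu)).2
  rw [hQ]
  exact hbound.trans (Nat.mul_le_mul_left _ (card_le_card (filter_subset _ _)))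

theorem exists_precoloring_extending [Nonempty α] {s : ℕ} {P D₀ : Finset V} (Q : Finset V)
    (L : V → Finset α) (r : V → α) (hr : ∀ v ∈ D₀, r v ∈ L v) (hL : ∀ u ∈ P, s < #(L u)) :
    ∃ σ : V → α, (∀ u ∈ P, σ u ∈ L u) ∧ (∀ v ∈ D₀, σ v = r v) ∧
      (s + #(P \ D₀)) * #{v ∈ Q | r v ∈ P.image σ} ≤
        (s + #(P \ D₀)) * #{v ∈ Q | r v ∈ D₀.image r} +
          #(P \ D₀) * #{v ∈ Q | r v ∉ D₀.image r} := by
  set R := D₀.image r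
  set Q' := {v ∈ Q | r v ∉ R}
  obtain ⟨σ, hσL, hσ⟩ := exists_representatives_card_le Q' r s (P \ D₀) L
    fun u hu => hL u (mem_sdiff.mp hu).1
  refine ⟨fun u => if u ∈ D₀ then r u else σ u, fun u hu => ?_, fun v hv => if_pos hv, ?_⟩
  · dsimp only
    split_ifs with h
    exacts [hr u h, hσL u (mem_sdiff.mpr ⟨hu, h⟩)]
  have hblocked : #{v ∈ Q | r v ∈ P.image fun u => if u ∈ D₀ then r u else σ u}
      ≤ #{v ∈ Q | r v ∈ R} + #{v ∈ Q' | r v ∈ (P \ D₀).image σ} := by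
    refine (card_le_card fun v hv => ?_).trans (card_union_le _ _)
    obtain ⟨hvQ, u, hu, hσu⟩ := by simpa only [mem_filter, mem_image] using hv
    by_cases hvR : r v ∈ R
    · exact mem_union_left _ (mem_filter.mpr ⟨hvQ, hvR⟩)
    by_cases huD : u ∈ D₀
    · rw [if_pos huD] at hσu
      exact absurd (hσu ▸ mem_image_of_mem r huD) hvR
    · rw [if_neg huD] at hσu
      exact mem_union_right _ (mem_filter.mpr ⟨mem_filter.mpr ⟨hvQ, hvR⟩,
        hσu ▸ mem_image_of_mem σ (mem_sdiff.mpr ⟨hu, huD⟩)⟩)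
  have := hσ.trans (Nat.mul_le_mul_left _ (card_le_card (filter_subset _ _)))
  nlinarith

theorem exists_precoloring [Nonempty α] {k s : ℕ} (hk : 0 < k) {P D₀ : Finset V} (Q : Finset V)
    (L : V → Finset α) (r : V → α) (hD₀ : D₀ ⊆ P) (hr : ∀ v ∈ D₀, r v ∈ L v)
    (hs : k * #P ≤ s) (hL : ∀ u ∈ P, s < #(L u)) :
    ∃ σ : V → α, (∀ u ∈ P, σ u ∈ L u) ∧
      (k + 1) * #{v ∈ Q | r v ∈ P.image σ} + k * #D₀ ≤
        #Q + k * (k + 1) * #{v ∈ D₀ | σ v = r v} := by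
  rcases P.eq_empty_or_nonempty with rfl | hP
  · exact ⟨r, by simp, by simp [subset_empty.mp hD₀]⟩
  have hR : #(D₀.image r) ≤ #D₀ := card_image_le
  have hD₀P : #D₀ ≤ #P := card_le_card hD₀
  obtain ⟨σb, hσbL, hσb⟩ := exists_precoloring_avoiding P L (D₀.image r) Q r (by nlinarith) hL
  obtain ⟨σa, hσaL, hσaD₀, hσa⟩ := exists_precoloring_extending Q L r hr hL
  rcases precoloring_dichotomy hk (card_pos.mpr hP) hs hR (card_sdiff_add_card_eq_card hD₀)
    (card_filter_add_card_filter_not _) hσb hσa (card_le_card (filter_subset _ _)) with hB | hA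
  · exact ⟨σb, hσbL, Nat.le_add_right_of_le hB⟩
  refine ⟨σa, hσaL, ?_⟩
  rw [filter_true_of_mem hσaD₀]
  nlinarith

end Precoloring

/-- The statement for `k` parts, in a form that survives deleting a part: the graph is the complete
multipartite graph on `S` whose parts are the fibres of `part` (labelled `0, …, k - 1` in order of
nondecreasing size), `s` bounds the number of vertices outside the last (largest) part, and every
list has more than `s` colours. -/
def MultipartiteFlexible (V α : Type*) [DecidableEq V] [DecidableEq α] (k : ℕ) : Prop :=
  ∀ (S : Finset V) (part : V → ℕ) (s : ℕ) (L : V → Finset α) (D : Finset V) (r : V → α),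
    (∀ v ∈ S, part v < k) →
    (∀ i j, i ≤ j → j < k → #{v ∈ S | part v = i} ≤ #{v ∈ S | part v = j}) →
    #{v ∈ S | part v ≠ k - 1} ≤ s → (∀ v ∈ S, s < #(L v)) →
    D ⊆ S → (∀ v ∈ D, r v ∈ L v) →
    ∃ f : V → α, (∀ v ∈ S, f v ∈ L v) ∧ (∀ u ∈ S, ∀ v ∈ S, part u ≠ part v → f u ≠ f v) ∧
      #D ≤ k * #{v ∈ D | f v = r v}

theorem mul_card_filter_eq_zero_le {V : Type*} {S : Finset V} {part : V → ℕ} {k : ℕ}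
    (hpart : ∀ v ∈ S, part v < k + 1)
    (hmono : ∀ i j, i ≤ j → j < k + 1 → #{v ∈ S | part v = i} ≤ #{v ∈ S | part v = j}) :
    k * #{v ∈ S | part v = 0} ≤ #{v ∈ S | part v ≠ k} := by
  have hfiber : ∀ i ∈ range k, #{v ∈ {v ∈ S | part v ≠ k} | part v = i} = #{v ∈ S | part v = i} :=
    fun i hi => by
      rw [filter_filter]
      congr 1
      refine filter_congr fun v _ => ?_
      have := mem_range.mp hi
      omega
  calc k * #{v ∈ S | part v = 0} = ∑ _i ∈ range k, #{v ∈ S | part v = 0} := by simp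
    _ ≤ ∑ i ∈ range k, #{v ∈ S | part v = i} :=
        sum_le_sum fun i hi => hmono 0 i i.zero_le (by have := mem_range.mp hi; omega)
    _ = #{v ∈ S | part v ≠ k} := by
        rw [← sum_congr rfl hfiber, ← card_eq_sum_card_fiberwise fun v hv => ?_]
        have := hpart v (mem_filter.mp hv).1
        have := (mem_filter.mp hv).2
        simp only [coe_range, Set.mem_Iio]
        omega

section Flexible

variable {V α : Type*} [DecidableEq V] [DecidableEq α]

theorem multipartiteFlexible_one [Nonempty α] : MultipartiteFlexible V α 1 := by
  intro S part s L D r hpart _ _ hL hD hr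
  have hcolor : ∀ v ∈ S, ∃ c ∈ L v, v ∈ D → c = r v := fun v hv => by
    by_cases hvD : v ∈ D
    · exact ⟨r v, hr v hvD, fun _ => rfl⟩
    · obtain ⟨c, hc⟩ := card_pos.mp (Nat.zero_lt_of_lt (hL v hv))
      exact ⟨c, hc, fun h => absurd h hvD⟩
  choose! f hfL hfD using hcolor
  refine ⟨f, hfL, fun u hu v hv huv => ?_, ?_⟩
  · have := hpart u hu; have := hpart v hv; omega
  · rw [filter_true_of_mem fun v hv => hfD v (hD hv) hv, one_mul]

theorem MultipartiteFlexible.exists_off_part_zero {k : ℕ} (ih : MultipartiteFlexible V α k)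
    (hk : 0 < k) {S : Finset V} {part : V → ℕ} {s : ℕ} {L : V → Finset α}
    (hpart : ∀ v ∈ S, part v < k + 1)
    (hmono : ∀ i j, i ≤ j → j < k + 1 → #{v ∈ S | part v = i} ≤ #{v ∈ S | part v = j})
    (hs : #{v ∈ S | part v ≠ k} ≤ s) (hL : ∀ v ∈ S, s < #(L v))
    (I : Finset α) (hI : #I ≤ #{v ∈ S | part v = 0}) {D : Finset V} {r : V → α}
    (hD : ∀ v ∈ D, v ∈ S ∧ part v ≠ 0) (hr : ∀ v ∈ D, r v ∈ L v \ I) :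
    ∃ f : V → α, (∀ v ∈ S, part v ≠ 0 → f v ∈ L v \ I) ∧
      (∀ u ∈ S, ∀ v ∈ S, part u ≠ 0 → part v ≠ 0 → part u ≠ part v → f u ≠ f v) ∧
      #D ≤ k * #{v ∈ D | f v = r v} := by
  have hshift (i : ℕ) :
      #{v ∈ {v ∈ S | part v ≠ 0} | part v - 1 = i} = #{v ∈ S | part v = i + 1} := by
    rw [filter_filter]; congr 1; exact filter_congr fun v _ => by omega
  have hrest : #{v ∈ {v ∈ S | part v ≠ 0} | part v - 1 ≠ k - 1} + #{v ∈ S | part v = 0} =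
      #{v ∈ S | part v ≠ k} := by
    rw [← card_filter_add_card_filter_not (s := {v ∈ S | part v ≠ k}) (p := fun v => part v ≠ 0),
      filter_filter, filter_filter, filter_filter]
    congr 2 <;> exact filter_congr fun v _ => by omega
  obtain ⟨f, hfL, hfproper, hfcount⟩ := ih {v ∈ S | part v ≠ 0} (part · - 1)
    (s - #{v ∈ S | part v = 0}) (fun v => L v \ I) D r
    (fun v hv => by have := hpart v (mem_filter.mp hv).1; have := (mem_filter.mp hv).2; omega)
    (fun i j hij hj => by rw [hshift, hshift]; exact hmono _ _ (by omega) (by omega))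
    (by omega)
    (fun v hv => by have := le_card_sdiff I (L v); have := hL v (mem_filter.mp hv).1; omega)
    (fun v hv => mem_filter.mpr (hD v hv)) hr
  exact ⟨f, fun v hv h => hfL v (mem_filter.mpr ⟨hv, h⟩),
    fun u hu v hv hu₀ hv₀ huv => hfproper u (mem_filter.mpr ⟨hu, hu₀⟩) v (mem_filter.mpr ⟨hv, hv₀⟩)
      (by omega), hfcount⟩

theorem MultipartiteFlexible.extend {k : ℕ} (ih : MultipartiteFlexible V α k) (hk : 0 < k)
    {S : Finset V} {part : V → ℕ} {s : ℕ} {L : V → Finset α} {D : Finset V} {r : V → α}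
    (hpart : ∀ v ∈ S, part v < k + 1)
    (hmono : ∀ i j, i ≤ j → j < k + 1 → #{v ∈ S | part v = i} ≤ #{v ∈ S | part v = j})
    (hs : #{v ∈ S | part v ≠ k} ≤ s) (hL : ∀ v ∈ S, s < #(L v))
    (hD : D ⊆ S) (hr : ∀ v ∈ D, r v ∈ L v)
    (σ : V → α) (hσ : ∀ v ∈ S, part v = 0 → σ v ∈ L v) :
    ∃ f : V → α, (∀ v ∈ S, f v ∈ L v) ∧ (∀ u ∈ S, ∀ v ∈ S, part u ≠ part v → f u ≠ f v) ∧
      (∀ v, part v = 0 → f v = σ v) ∧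
      #{v ∈ D | part v ≠ 0} ≤ #{v ∈ D | part v ≠ 0 ∧ r v ∈ image σ {v ∈ S | part v = 0}}
        + k * #{v ∈ D | part v ≠ 0 ∧ f v = r v} := by
  set I := image σ {v ∈ S | part v = 0}
  have hσI : ∀ v ∈ S, part v = 0 → σ v ∈ I :=
    fun v hv h => mem_image_of_mem σ (mem_filter.mpr ⟨hv, h⟩)
  obtain ⟨f', hf'L, hf'proper, hf'count⟩ := ih.exists_off_part_zero hk hpart hmono hs hL I
    card_image_le (D := {v ∈ D | part v ≠ 0 ∧ r v ∉ I}) (r := r)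
    (fun v hv => ⟨hD (mem_filter.mp hv).1, (mem_filter.mp hv).2.1⟩)
    (fun v hv => mem_sdiff.mpr ⟨hr v (mem_filter.mp hv).1, (mem_filter.mp hv).2.2⟩)
  refine ⟨fun v => if part v = 0 then σ v else f' v, fun v hv => ?_, fun u hu v hv huv => ?_,
    fun v h => if_pos h, ?_⟩
  · dsimp only
    split_ifs with h
    exacts [hσ v hv h, (mem_sdiff.mp (hf'L v hv h)).1]
  · dsimp only
    split_ifs with hu₀ hv₀ hv₀
    · exact absurd (hu₀.trans hv₀.symm) huv
    · exact fun h => (mem_sdiff.mp (hf'L v hv hv₀)).2 (h ▸ hσI u hu hu₀)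
    · exact fun h => (mem_sdiff.mp (hf'L u hu hu₀)).2 (h ▸ hσI v hv hv₀)
    · exact hf'proper u hu v hv hu₀ hv₀ huv
  · dsimp only
    have hsplit := card_filter_add_card_filter_not (s := {v ∈ D | part v ≠ 0}) (p := (r · ∈ I))
    rw [filter_filter, filter_filter] at hsplit
    have hsat : #{v ∈ {v ∈ D | part v ≠ 0 ∧ r v ∉ I} | f' v = r v}
        ≤ #{v ∈ D | part v ≠ 0 ∧ (if part v = 0 then σ v else f' v) = r v} := by
      refine card_le_card fun v hv => ?_
      simp only [mem_filter] at hv ⊢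
      exact ⟨hv.1.1, hv.1.2.1, by rw [if_neg hv.1.2.1]; exact hv.2⟩
    have := Nat.mul_le_mul_left k hsat
    omega

theorem MultipartiteFlexible.succ [Nonempty α] {k : ℕ} (hk : 0 < k)
    (ih : MultipartiteFlexible V α k) : MultipartiteFlexible V α (k + 1) := by
  intro S part s L D r hpart hmono hs hL hD hr
  rw [Nat.add_sub_cancel] at hs
  have hD₀ : {v ∈ D | part v = 0} ⊆ {v ∈ S | part v = 0} :=
    fun v hv => mem_filter.mpr ⟨hD (mem_filter.mp hv).1, (mem_filter.mp hv).2⟩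
  obtain ⟨σ, hσL, hσ⟩ := exists_precoloring hk {v ∈ D | part v ≠ 0} L r hD₀
    (fun v hv => hr v (mem_filter.mp hv).1) ((mul_card_filter_eq_zero_le hpart hmono).trans hs)
    (fun u hu => hL u (mem_filter.mp hu).1)
  obtain ⟨f, hfL, hfproper, hfσ, hfcount⟩ := ih.extend hk hpart hmono hs hL hD hr σ
    fun v hv h => hσL v (mem_filter.mpr ⟨hv, h⟩)
  refine ⟨f, hfL, hfproper, ?_⟩
  rw [filter_filter] at hσ
  have hsat := card_filter_add_card_filter_not (s := {v ∈ D | f v = r v}) (p := fun v => part v = 0)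
  have hsat₀ : {v ∈ {v ∈ D | part v = 0} | σ v = r v} = {v ∈ {v ∈ D | f v = r v} | part v = 0} := by
    rw [filter_filter, filter_filter]
    exact filter_congr fun v _ => ⟨fun h => ⟨hfσ v h.1 ▸ h.2, h.1⟩, fun h => ⟨h.2, hfσ v h.2 ▸ h.1⟩⟩
  have hsat₁ : {v ∈ {v ∈ D | f v = r v} | part v ≠ 0} = {v ∈ D | part v ≠ 0 ∧ f v = r v} := by
    rw [filter_filter]
    exact filter_congr fun v _ => and_comm
  rw [hsat₀] at hσ
  rw [hsat₁] at hsat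
  have hsplit : #{v ∈ D | part v = 0} + #{v ∈ D | part v ≠ 0} = #D :=
    card_filter_add_card_filter_not _
  have key : ∀ {B d W t X : ℕ}, (k + 1) * B + k * d ≤ W + k * (k + 1) * t → W ≤ B + k * X →
      k * (d + W) ≤ k * ((k + 1) * (t + X)) := fun h₁ h₂ => by
    nlinarith [Nat.mul_le_mul_left (k + 1) h₂]
  rw [← hsplit, ← hsat]
  exact Nat.le_of_mul_le_mul_left (key hσ hfcount) hk

theorem multipartiteFlexible [Nonempty α] {k : ℕ} (hk : 0 < k) : MultipartiteFlexible V α k := by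
  induction k, hk using Nat.le_induction with
  | base => exact multipartiteFlexible_one
  | succ k hk ih => exact ih.succ hk

end Flexible

theorem card_filter_sigma_fst_mem {ι : Type*} [DecidableEq ι] {β : ι → Type*} [Fintype ι]
    [∀ i, Fintype (β i)] (I : Finset ι) :
    #{v : Σ i, β i | v.1 ∈ I} = ∑ i ∈ I, Fintype.card (β i) := by
  simp_rw [← card_univ, ← card_sigma]
  congr 1
  ext v
  simp

theorem stmt_12 (k : ℕ) (hk : 2 ≤ k) (n : Fin k → ℕ)
    (hmono : Monotone n)
    (L : (Σ i : Fin k, Fin (n i)) → Finset ℕ)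
    (hL : ∀ v, (L v).card = (∑ i ∈ Finset.univ.erase (⟨k - 1, by omega⟩ : Fin k), n i) + 1)
    (D : Finset (Σ i : Fin k, Fin (n i)))
    (r : (Σ i : Fin k, Fin (n i)) → ℕ) (hr : ∀ v ∈ D, r v ∈ L v) :
    ∃ f, properListColoring (SimpleGraph.completeMultipartiteGraph fun i => Fin (n i)) L f ∧
      D.card ≤ k * (D.filter fun v => f v = r v).card := by
  have hcard (I : Finset (Fin k)) : #{v : Σ i : Fin k, Fin (n i) | v.1 ∈ I} = ∑ i ∈ I, n i := by
    simpa using card_filter_sigma_fst_mem (β := fun i => Fin (n i)) I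
  have hpart (i : ℕ) (hi : i < k) : #{v : Σ i : Fin k, Fin (n i) | (v.1 : ℕ) = i} = n ⟨i, hi⟩ := by
    rw [← sum_singleton n ⟨i, hi⟩, ← hcard]
    simp [Fin.ext_iff]
  have hrest : #{v : Σ i : Fin k, Fin (n i) | (v.1 : ℕ) ≠ k - 1} =
      ∑ i ∈ univ.erase (⟨k - 1, by omega⟩ : Fin k), n i := by
    rw [← hcard]
    simp [Fin.ext_iff]
  have hsizes (i j : ℕ) (hij : i ≤ j) (hj : j < k) :
      #{v : Σ i : Fin k, Fin (n i) | (v.1 : ℕ) = i} ≤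
        #{v : Σ i : Fin k, Fin (n i) | (v.1 : ℕ) = j} := by
    rw [hpart i (hij.trans_lt hj), hpart j hj]
    exact hmono (Fin.mk_le_mk.mpr hij)
  obtain ⟨f, hfL, hfproper, hcount⟩ := multipartiteFlexible (by omega : 0 < k) univ
    (fun v : Σ i : Fin k, Fin (n i) => (v.1 : ℕ)) _ L D r (fun v _ => v.1.isLt) hsizes hrest.le
    (fun v _ => by rw [hL v]; exact Nat.lt_succ_self _) (subset_univ D) hr
  exact ⟨f, ⟨fun v => hfL v (mem_univ v),
    fun u v huv => hfproper u (mem_univ u) v (mem_univ v) (Fin.val_injective.ne huv)⟩, hcount⟩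
end

section
/- Let G = K_{2,n} with n ∈ {2,3}. Then there exists a 2-assignment L for G and a request r of L with domain a single vertex such that no proper L-coloring of G satisfies the request; explicitly, with partite sets X = {x_1, x_2}, Y = {y_1,...,y_n}, take L(x_1) = {1,2}, L(x_2) = {3,4}, L(y_1) = {1,3}, L(y_2) = {1,4}, and (if n = 3) L(y_3) = {1,2}, with request r(x_1) = 1; then no proper L-coloring colors x_1 with color 1. -/
open Finset

def L2n (n : ℕ) : Fin 2 ⊕ Fin n → Finset ℕ := fun v =>
  match v with
  | Sum.inl i => if i.val = 0 then {1, 2} else {3, 4}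
  | Sum.inr j => if j.val = 0 then {1, 3} else if j.val = 1 then {1, 4} else {1, 2}

theorem stmt_13 (n : ℕ) (hn : n = 2 ∨ n = 3) :
    ¬ ∃ f, properListColoring (completeBipartiteGraph (Fin 2) (Fin n)) (L2n n) f ∧
      f (Sum.inl 0) = 1 := by
  have hn2 : 2 ≤ n := by omega
  rintro ⟨f, ⟨hmem, hadj⟩, hx⟩
  have hy1 := hmem (Sum.inr ⟨0, by omega⟩)
  have hy2 := hmem (Sum.inr ⟨1, by omega⟩)
  have hx2 := hmem (Sum.inl 1)
  simp [L2n] at hy1 hy2 hx2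
  have a1 := hadj (Sum.inl 0) (Sum.inr ⟨0, by omega⟩) (by simp)
  have a2 := hadj (Sum.inl 0) (Sum.inr ⟨1, by omega⟩) (by simp)
  have b1 := hadj (Sum.inl 1) (Sum.inr ⟨0, by omega⟩) (by simp)
  have b2 := hadj (Sum.inl 1) (Sum.inr ⟨1, by omega⟩) (by simp)
  omega
end
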